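/- arXiv:1806.01272 — 11 statements merged into one kernel-verified Lean document; each statement's English description precedes it below -/
import Mathlib

section
/- Let S be a multiplicative semigroup of bounded operators on a complex Hilbert space H. Then S is a selfadjoint-ideal (SI) semigroup if and only if for every T ∈ S there exist X, Y ∈ S ∪ {I} (I the identity operator) such that T* = X T Y. -/
open ContinuousLinearMap

variable {H : Type*} [NormedAddCommGroup H] [InnerProductSpace ℂ H] [CompleteSpace H]

/-- A multiplicative semigroup of operators: a set closed under composition. -/
def IsMulSemigroup {M : Type*} [Mul M] (S : Set M) : Prop :=
  ∀ A ∈ S, ∀ B ∈ S, A * B ∈ S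

/-- `J` is a (two-sided) semigroup-ideal of `S`. -/
def IsSemigroupIdeal {M : Type*} [Mul M] (S J : Set M) : Prop :=
  J ⊆ S ∧ ∀ T ∈ J, ∀ X ∈ S, X * T ∈ J ∧ T * X ∈ J

/-- `S` is a selfadjoint-ideal (SI) semigroup: every semigroup-ideal of `S`
is closed under adjoints. -/
def IsSI (S : Set (H →L[ℂ] H)) : Prop :=
  ∀ J : Set (H →L[ℂ] H), IsSemigroupIdeal S J → ∀ T ∈ J, adjoint T ∈ J

/-- `S` is SI iff for every `T ∈ S` there are `X, Y ∈ S ∪ {I}` with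
`T* = X T Y`. -/
theorem stmt0 (S : Set (H →L[ℂ] H)) (hS : IsMulSemigroup S) :
    IsSI S ↔ ∀ T ∈ S, ∃ X ∈ S ∪ {(1 : H →L[ℂ] H)}, ∃ Y ∈ S ∪ {(1 : H →L[ℂ] H)},
      adjoint T = X * T * Y := by
  constructor
  · intro hSI T hT
    set J : Set (H →L[ℂ] H) :=
      {A | ∃ X ∈ S ∪ {(1 : H →L[ℂ] H)}, ∃ Y ∈ S ∪ {(1 : H →L[ℂ] H)}, A = X * T * Y} with hJdef
    have hJ : IsSemigroupIdeal S J := by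
      constructor
      · rintro A ⟨X, hX, Y, hY, rfl⟩
        have h1 : X * T ∈ S := by
          rcases hX with hX | hX
          · exact hS X hX T hT
          · simp only [Set.mem_singleton_iff] at hX
            simpa [hX] using hT
        rcases hY with hY | hY
        · exact hS _ h1 Y hY
        · simp only [Set.mem_singleton_iff] at hY
          simpa [hY] using h1
      · rintro A ⟨X, hX, Y, hY, rfl⟩ Z hZ
        constructor
        · refine ⟨Z * X, ?_, Y, hY, by simp [mul_assoc]⟩
          rcases hX with hX | hX
          · exact Or.inl (hS Z hZ X hX)
          · simp only [Set.mem_singleton_iff] at hX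
            simp [hX, hZ]
        · refine ⟨X, hX, Y * Z, ?_, by simp [mul_assoc]⟩
          rcases hY with hY | hY
          · exact Or.inl (hS Y hY Z hZ)
          · simp only [Set.mem_singleton_iff] at hY
            simp [hY, hZ]
    have hTJ : T ∈ J := ⟨1, Or.inr rfl, 1, Or.inr rfl, by simp⟩
    obtain ⟨X, hX, Y, hY, hEq⟩ := hSI J hJ T hTJ
    exact ⟨X, hX, Y, hY, hEq⟩
  · rintro h J ⟨hJS, hJ⟩ T hT
    obtain ⟨X, hX, Y, hY, hEq⟩ := h T (hJS hT)
    rw [hEq]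
    rcases hX with hX | hX
    · have h1 : X * T ∈ J := (hJ T hT X hX).1
      rcases hY with hY | hY
      · exact (hJ _ h1 Y hY).2
      · simp only [Set.mem_singleton_iff] at hY
        simpa [hY] using h1
    · simp only [Set.mem_singleton_iff] at hX
      rcases hY with hY | hY
      · simpa [hX] using (hJ T hT Y hY).2
      · simp only [Set.mem_singleton_iff] at hY
        simpa [hX, hY] using hT
end

section
/- Let S be a multiplicative semigroup of bounded operators on a complex Hilbert space H such that every element of S is a compact operator, and suppose S contains an operator T that is not selfadjoint (T ≠ T*) and has infinite rank (the range of T is not finite-dimensional). Then S is not a selfadjoint-ideal (SI) semigroup. -/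
/-!
If `T*` lies in the semigroup ideal generated by `T`, then `T* = X T Y` with `X, Y ∈ S ∪ {1}`,
not both `1`, so `T = T** = C T D` with `C = Y* X` and `D = Y X*` compact (adjoints of compact
operators are compact). Measure `N`-dimensional volume by Gram determinants: a compact operator
multiplies the squared volume of an orthonormal `N`-frame by at most `K ε ^ N`, for every `ε > 0`,
because only boundedly many vectors of an orthonormal family can have images longer than `√ε`.
Iterating `T = Cⁿ T Dⁿ` shows that `T` multiplies squared `N`-volumes by at most
`(K₁ K₂ 4⁻ᴺ)ⁿ ‖T‖²ᴺ` for every `n`, hence by `0` once `K₁ K₂ 4⁻ᴺ < 1`; so `T` maps no `N`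
vectors to independent ones, and its range is finite-dimensional.
-/

open ContinuousLinearMap

variable {H : Type*} [NormedAddCommGroup H] [InnerProductSpace ℂ H] [CompleteSpace H]

open scoped InnerProductSpace
open Matrix Filter Topology

variable {𝕜 E : Type*} [RCLike 𝕜] [NormedAddCommGroup E] [InnerProductSpace 𝕜 E]

section GramDet

variable {ι : Type*} [Fintype ι]

theorem gram_linearCombination (M : Matrix ι ι 𝕜) (w : ι → E) :
    gram 𝕜 (fun i => ∑ j, M i j • w j) = M.map (starRingEnd 𝕜) * gram 𝕜 w * Mᵀ := by
  ext i k
  simp only [mul_apply, gram_apply, map_apply, transpose_apply, sum_inner, inner_sum,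
    inner_smul_left, inner_smul_right, Finset.sum_mul, Finset.mul_sum]
  exact Finset.sum_congr rfl fun _ _ => Finset.sum_congr rfl fun _ _ => by ring

variable [DecidableEq ι]

variable (𝕜) in
noncomputable def gramDet (v : ι → E) : ℝ := ‖(gram 𝕜 v).det‖

theorem gramDet_linearCombination (M : Matrix ι ι 𝕜) (w : ι → E) :
    gramDet 𝕜 (fun i => ∑ j, M i j • w j) = ‖M.det‖ ^ 2 * gramDet 𝕜 w := by
  have hconj : (M.map (starRingEnd 𝕜)).det = starRingEnd 𝕜 M.det := (RingHom.map_det _ _).symm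
  rw [gramDet, gram_linearCombination, det_mul, det_mul, det_transpose, hconj,
    norm_mul, norm_mul, RCLike.norm_conj, gramDet]
  ring

theorem gramDet_of_orthonormal {e : ι → E} (he : Orthonormal 𝕜 e) : gramDet 𝕜 e = 1 := by
  simp [gramDet, gram_eq_one_iff_orthonormal.mpr he]

theorem gramDet_pos_of_linearIndependent {v : ι → E} (hv : LinearIndependent 𝕜 v) :
    0 < gramDet 𝕜 v :=
  norm_pos_iff.mpr (det_gram_ne_zero_iff_linearIndependent.mpr hv)

theorem gramDet_eq_zero_of_not_linearIndependent {v : ι → E} (hv : ¬LinearIndependent 𝕜 v) :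
    gramDet 𝕜 v = 0 :=
  norm_eq_zero.mpr (not_not.mp (mt det_gram_ne_zero_iff_linearIndependent.mp hv))

theorem gramDet_eq_prod_eigenvalues (v : ι → E) :
    gramDet 𝕜 v = ∏ i, (isHermitian_gram 𝕜 v).eigenvalues i := by
  rw [gramDet, (isHermitian_gram 𝕜 v).det_eq_prod_eigenvalues, ← RCLike.ofReal_prod,
    RCLike.norm_ofReal,
    abs_of_nonneg (Finset.prod_nonneg fun i _ => (posSemidef_gram 𝕜 v).eigenvalues_nonneg i)]

theorem sum_eigenvalues_gram (v : ι → E) :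
    ∑ i, (isHermitian_gram 𝕜 v).eigenvalues i = ∑ i, ‖v i‖ ^ 2 := by
  have h := (isHermitian_gram 𝕜 v).trace_eq_sum_eigenvalues
  simp only [trace, diag_apply, gram_apply, inner_self_eq_norm_sq_to_K] at h
  exact_mod_cast h.symm

theorem gramDet_smul (c : ι → 𝕜) (v : ι → E) :
    gramDet 𝕜 (fun i => c i • v i) = (∏ i, ‖c i‖) ^ 2 * gramDet 𝕜 v := by
  simpa [diagonal_apply, ite_smul] using gramDet_linearCombination (diagonal c) v

theorem gramDet_le_one_of_norm_eq_one {u : ι → E} (hu : ∀ i, ‖u i‖ = 1) : gramDet 𝕜 u ≤ 1 := by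
  set μ := (isHermitian_gram 𝕜 u).eigenvalues
  have hsum : ∑ i, (μ i - 1) = 0 := by
    simp [Finset.sum_sub_distrib, μ, sum_eigenvalues_gram, hu]
  calc gramDet 𝕜 u = ∏ i, μ i := gramDet_eq_prod_eigenvalues u
    _ ≤ ∏ i, Real.exp (μ i - 1) := Finset.prod_le_prod
        (fun i _ => (posSemidef_gram 𝕜 u).eigenvalues_nonneg i)
        (fun i _ => by linarith [Real.add_one_le_exp (μ i - 1)])
    _ = 1 := by rw [← Real.exp_sum, hsum, Real.exp_zero]

theorem gramDet_le_prod_norm_sq (v : ι → E) : gramDet 𝕜 v ≤ ∏ i, ‖v i‖ ^ 2 := by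
  by_cases hv : LinearIndependent 𝕜 v
  · have hnorm : ∀ i, ‖v i‖ ≠ 0 := fun i => norm_ne_zero_iff.mpr (hv.ne_zero i)
    set u : ι → E := fun i => (‖v i‖⁻¹ : 𝕜) • v i
    have hvu : v = fun i => (‖v i‖ : 𝕜) • u i := by
      funext i
      simp [u, smul_smul, hnorm i]
    have hu : ∀ i, ‖u i‖ = 1 := fun i => by simp [u, norm_smul, hnorm i]
    rw [hvu, gramDet_smul]
    simpa [u, norm_smul, hnorm, Finset.prod_pow] using
      mul_le_of_le_one_right (by positivity) (gramDet_le_one_of_norm_eq_one hu)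
  · rw [gramDet_eq_zero_of_not_linearIndependent hv]
    positivity

theorem gramDet_comp_le {F : Type*} [NormedAddCommGroup F] [InnerProductSpace 𝕜 F]
    (f : E →ₗ[𝕜] F) {s : ℝ} (hs : 0 ≤ s)
    (hf : ∀ e : ι → E, Orthonormal 𝕜 e → gramDet 𝕜 (f ∘ e) ≤ s) (v : ι → E) :
    gramDet 𝕜 (f ∘ v) ≤ s * gramDet 𝕜 v := by
  by_cases hv : LinearIndependent 𝕜 v
  · set W := Submodule.span 𝕜 (Set.range v)
    have : FiniteDimensional 𝕜 W := FiniteDimensional.span_of_finite 𝕜 (Set.finite_range v)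
    have hdim : Fintype.card ι = Module.finrank 𝕜 W := (finrank_span_eq_card hv).symm
    let b : OrthonormalBasis ι 𝕜 W :=
      (stdOrthonormalBasis 𝕜 W).reindex (Fintype.equivFinOfCardEq hdim).symm
    set e : ι → E := fun j => b j
    have he : Orthonormal 𝕜 e := b.orthonormal.comp_linearIsometry W.subtypeₗᵢ
    set M : Matrix ι ι 𝕜 := of fun i j => b.repr ⟨v i, Submodule.subset_span ⟨i, rfl⟩⟩ j
    have hv_eq : v = fun i => ∑ j, M i j • e j := funext fun i => by
      simpa [M, e] using
        congrArg W.subtype (b.sum_repr ⟨v i, Submodule.subset_span ⟨i, rfl⟩⟩).symm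
    have hfv_eq : f ∘ v = fun i => ∑ j, M i j • (f ∘ e) j := by
      rw [hv_eq]; ext; simp
    calc gramDet 𝕜 (f ∘ v) = ‖M.det‖ ^ 2 * gramDet 𝕜 (f ∘ e) := by
          rw [hfv_eq, gramDet_linearCombination]
      _ ≤ ‖M.det‖ ^ 2 * s := mul_le_mul_of_nonneg_left (hf e he) (sq_nonneg _)
      _ = s * gramDet 𝕜 v := by
          rw [hv_eq, gramDet_linearCombination, gramDet_of_orthonormal he]; ring
  · rw [gramDet_eq_zero_of_not_linearIndependent fun h => hv h.of_comp]
    exact mul_nonneg hs (norm_nonneg _)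

end GramDet

theorem eq_pow_mul_mul_pow {M : Type*} [Monoid M] {a b c : M} (h : a = b * a * c) (n : ℕ) :
    a = b ^ n * a * c ^ n := by
  induction n with
  | zero => simp
  | succ n ih =>
    calc a = b ^ n * a * c ^ n := ih
      _ = b ^ n * (b * a * c) * c ^ n := congrArg (fun x => b ^ n * x * c ^ n) h
      _ = b ^ (n + 1) * a * c ^ (n + 1) := by rw [pow_succ, pow_succ' c]; simp only [mul_assoc]

theorem LinearMap.exists_linearIndependent_comp {K V W : Type*} [DivisionRing K]
    [AddCommGroup V] [Module K V] [AddCommGroup W] [Module K W] {f : V →ₗ[K] W}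
    (hf : ¬FiniteDimensional K (LinearMap.range f)) (N : ℕ) :
    ∃ x : Fin N → V, LinearIndependent K (f ∘ x) := by
  have hN : (N : Cardinal) ≤ Module.rank K (LinearMap.range f) :=
    Cardinal.natCast_lt_aleph0.le.trans (not_lt.mp (mt Module.rank_lt_aleph0_iff.mp hf))
  obtain ⟨y, hy⟩ := exists_linearIndependent_of_le_rank hN
  choose x hx using fun i => (y i).2
  exact ⟨x, by simpa [Function.comp_def, hx] using hy.map' _ (Submodule.ker_subtype _)⟩

section VolumeBounds

def GramDetLE (A : E →L[𝕜] E) (N : ℕ) (s : ℝ) : Prop :=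
  ∀ e : Fin N → E, Orthonormal 𝕜 e → gramDet 𝕜 (A ∘ e) ≤ s

variable {A B : E →L[𝕜] E} {N : ℕ} {s t : ℝ}

theorem GramDetLE.gramDet_comp_le (h : GramDetLE A N s) (hs : 0 ≤ s) (v : Fin N → E) :
    gramDet 𝕜 (A ∘ v) ≤ s * gramDet 𝕜 v :=
  _root_.gramDet_comp_le (A : E →ₗ[𝕜] E) hs h v

theorem GramDetLE.mul (hA : GramDetLE A N s) (hs : 0 ≤ s) (hB : GramDetLE B N t) :
    GramDetLE (A * B) N (s * t) := fun e he =>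
  (hA.gramDet_comp_le hs (B ∘ e)).trans (mul_le_mul_of_nonneg_left (hB e he) hs)

theorem GramDetLE.pow (hA : GramDetLE A N s) (hs : 0 ≤ s) : ∀ n, GramDetLE (A ^ n) N (s ^ n)
  | 0 => fun e he => by simp [gramDet_of_orthonormal he]
  | n + 1 => by
    rw [pow_succ, pow_succ]
    exact (hA.pow hs n).mul (pow_nonneg hs n) hA

theorem gramDetLE_opNorm (A : E →L[𝕜] E) (N : ℕ) : GramDetLE A N (‖A‖ ^ (2 * N)) := fun e he =>
  calc gramDet 𝕜 (A ∘ e) ≤ ∏ i, ‖A (e i)‖ ^ 2 := gramDet_le_prod_norm_sq _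
    _ ≤ ∏ _i : Fin N, ‖A‖ ^ 2 := Finset.prod_le_prod (fun _ _ => sq_nonneg _) fun i _ =>
        pow_le_pow_left₀ (norm_nonneg _) (by simpa [he.1 i] using A.le_opNorm (e i)) 2
    _ = ‖A‖ ^ (2 * N) := by simp [pow_mul]

def FastVolumeDecay (A : E →L[𝕜] E) : Prop :=
  ∀ ε > 0, ∃ K, 0 ≤ K ∧ ∀ N, GramDetLE A N (K * ε ^ N)

theorem GramDetLE.of_forall_pow {q c : ℝ} (hq₀ : 0 ≤ q) (hq₁ : q < 1)
    (h : ∀ n, GramDetLE A N (q ^ n * c)) : GramDetLE A N 0 := fun e he =>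
  ge_of_tendsto' (by simpa using (tendsto_pow_atTop_nhds_zero_of_lt_one hq₀ hq₁).mul_const c)
    fun n => h n e he

theorem GramDetLE.finiteDimensional_range (h : GramDetLE A N 0) :
    FiniteDimensional 𝕜 (LinearMap.range (A : E →ₗ[𝕜] E)) := by
  by_contra hA
  obtain ⟨x, hx⟩ := (A : E →ₗ[𝕜] E).exists_linearIndependent_comp hA N
  have hx_zero := h.gramDet_comp_le le_rfl x
  rw [zero_mul] at hx_zero
  exact (gramDet_pos_of_linearIndependent hx).not_ge hx_zero

theorem finiteDimensional_range_of_eq_mul_mul {C T D : E →L[𝕜] E}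
    (hC : FastVolumeDecay C) (hD : FastVolumeDecay D) (hT : T = C * T * D) :
    FiniteDimensional 𝕜 (LinearMap.range (T : E →ₗ[𝕜] E)) := by
  obtain ⟨K₁, hK₁, hC⟩ := hC (1 / 2) (by norm_num)
  obtain ⟨K₂, hK₂, hD⟩ := hD (1 / 2) (by norm_num)
  have hhalf : Tendsto (fun N : ℕ => (1 / 2 : ℝ) ^ N) atTop (𝓝 0) :=
    tendsto_pow_atTop_nhds_zero_of_lt_one (by norm_num) (by norm_num)
  have hsmall : Tendsto (fun N : ℕ => K₁ * (1 / 2 : ℝ) ^ N * (K₂ * (1 / 2) ^ N)) atTop (𝓝 0) := by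
    simpa using (hhalf.const_mul K₁).mul (hhalf.const_mul K₂)
  obtain ⟨N, hN⟩ := (hsmall.eventually (gt_mem_nhds zero_lt_one)).exists
  set s := K₁ * (1 / 2 : ℝ) ^ N
  set t := K₂ * (1 / 2 : ℝ) ^ N
  have hs : 0 ≤ s := by positivity
  have ht : 0 ≤ t := by positivity
  have hbound : ∀ n, GramDetLE T N ((s * t) ^ n * ‖T‖ ^ (2 * N)) := fun n => by
    have := (((hC N).pow hs n).mul (pow_nonneg hs n) (gramDetLE_opNorm T N)).mul
      (by positivity) ((hD N).pow ht n)
    rwa [← eq_pow_mul_mul_pow hT, mul_right_comm, ← mul_pow] at this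
  exact (GramDetLE.of_forall_pow (by positivity) hN hbound).finiteDimensional_range

end VolumeBounds

section Compact

variable {A : E →L[𝕜] E}

theorem IsCompactOperator.exists_norm_sub_starProjection_comp_le
    (hA : IsCompactOperator A) {δ : ℝ} (hδ : 0 < δ) :
    ∃ (W : Submodule 𝕜 E) (_ : FiniteDimensional 𝕜 W), ‖A - W.starProjection ∘L A‖ ≤ δ := by
  have hA' : IsCompactOperator (A : E →ₗ[𝕜] E) := hA
  obtain ⟨t, htfin, hcover⟩ := Metric.totallyBounded_iff.mp
    ((hA'.isCompact_closure_image_closedBall 1).totallyBounded.subset subset_closure) δ hδ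
  set W := Submodule.span 𝕜 t
  have : FiniteDimensional 𝕜 W := FiniteDimensional.span_of_finite 𝕜 htfin
  refine ⟨W, this, opNorm_le_of_unit_norm hδ.le fun x hx => ?_⟩
  obtain ⟨y, hy, hxy⟩ := Set.mem_iUnion₂.mp (hcover ⟨x, by simp [hx], rfl⟩)
  calc ‖(A - W.starProjection ∘L A) x‖ = ‖A x - W.starProjection (A x)‖ := rfl
    _ ≤ ‖A x - y‖ := by
        rw [Submodule.starProjection_minimal]
        exact ciInf_le ⟨0, Set.forall_mem_range.mpr fun _ => norm_nonneg _⟩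
          (⟨y, Submodule.subset_span hy⟩ : W)
    _ ≤ δ := (mem_ball_iff_norm.mp hxy).le

theorem isCompactOperator_mul_of_or {A B : E →L[𝕜] E}
    (h : IsCompactOperator A ∨ IsCompactOperator B) : IsCompactOperator (A * B) :=
  h.elim (fun hA => hA.comp_clm B) (fun hB => hB.clm_comp A)

variable [CompleteSpace E]

theorem sum_norm_starProjection_sq_le {ι : Type*} [Fintype ι]
    (W : Submodule 𝕜 E) [FiniteDimensional 𝕜 W] (A : E →L[𝕜] E) {e : ι → E}
    (he : Orthonormal 𝕜 e) :
    ∑ k, ‖W.starProjection (A (e k))‖ ^ 2 ≤ Module.finrank 𝕜 W * ‖A‖ ^ 2 := by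
  set b := stdOrthonormalBasis 𝕜 W
  have hparseval : ∀ y, ‖W.starProjection y‖ ^ 2 = ∑ j, ‖⟪(b j : E), y⟫_𝕜‖ ^ 2 := fun y => by
    rw [Submodule.starProjection_apply, Submodule.norm_coe, ← b.sum_sq_norm_inner_right]
    simp
  calc ∑ k, ‖W.starProjection (A (e k))‖ ^ 2
      = ∑ j, ∑ k, ‖⟪e k, adjoint A (b j)⟫_𝕜‖ ^ 2 := by
        simp_rw [hparseval, adjoint_inner_right, norm_inner_symm (b _ : E)]
        exact Finset.sum_comm
    _ ≤ ∑ _j, ‖A‖ ^ 2 := Finset.sum_le_sum fun j _ => by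
        refine (he.sum_inner_products_le _).trans ?_
        simpa [← Submodule.coe_norm, b.orthonormal.1 j] using
          pow_le_pow_left₀ (norm_nonneg _) ((adjoint A).le_opNorm (b j)) 2
    _ = Module.finrank 𝕜 W * ‖A‖ ^ 2 := by simp

theorem IsCompactOperator.adjoint (hA : IsCompactOperator A) :
    IsCompactOperator (ContinuousLinearMap.adjoint A) := by
  refine (isClosed_setOfPred_isCompactOperator (σ₁₂ := RingHom.id 𝕜)).closure_subset
    (Metric.mem_closure_iff.mpr fun δ hδ => ?_)
  obtain ⟨W, _, hW⟩ := hA.exists_norm_sub_starProjection_comp_le (half_pos hδ)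
  refine ⟨ContinuousLinearMap.adjoint A ∘L W.starProjection, ?_, ?_⟩
  · exact (isCompactOperator_of_locallyCompactSpace_dom W.orthogonalProjectionOnto).clm_comp
      (ContinuousLinearMap.adjoint A ∘L W.subtypeL)
  · have hadj : ContinuousLinearMap.adjoint A ∘L W.starProjection =
        ContinuousLinearMap.adjoint (W.starProjection ∘L A) := by
      rw [adjoint_comp, (isSelfAdjoint_starProjection W).adjoint_eq]
    rw [dist_eq_norm, hadj, ← map_sub, LinearIsometryEquiv.norm_map]
    linarith

theorem IsCompactOperator.exists_card_lt_norm_le (hA : IsCompactOperator A) {δ : ℝ}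
    (hδ : 0 < δ) :
    ∃ M : ℕ, ∀ {N : ℕ} (e : Fin N → E), Orthonormal 𝕜 e →
      (Finset.univ.filter fun k => δ < ‖A (e k)‖).card ≤ M := by
  obtain ⟨W, _, hW⟩ := hA.exists_norm_sub_starProjection_comp_le (half_pos hδ)
  refine ⟨⌊Module.finrank 𝕜 W * ‖A‖ ^ 2 / (δ / 2) ^ 2⌋₊, fun e he => Nat.le_floor ?_⟩
  set big := Finset.univ.filter fun k => δ < ‖A (e k)‖
  have hbig : ∀ k ∈ big, δ / 2 < ‖W.starProjection (A (e k))‖ := fun k hk => by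
    have hk : δ < ‖A (e k)‖ := (Finset.mem_filter.mp hk).2
    have happrox : ‖A (e k) - W.starProjection (A (e k))‖ ≤ δ / 2 := by
      simpa [he.1 k] using ((A - W.starProjection ∘L A).le_opNorm (e k)).trans
        (mul_le_mul_of_nonneg_right hW (norm_nonneg _))
    linarith [norm_sub_norm_le (A (e k)) (W.starProjection (A (e k)))]
  rw [le_div_iff₀ (by positivity)]
  calc (big.card : ℝ) * (δ / 2) ^ 2 = ∑ _k ∈ big, (δ / 2) ^ 2 := by simp
    _ ≤ ∑ k ∈ big, ‖W.starProjection (A (e k))‖ ^ 2 := Finset.sum_le_sum fun k hk =>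
        pow_le_pow_left₀ (by positivity) (hbig k hk).le 2
    _ ≤ ∑ k, ‖W.starProjection (A (e k))‖ ^ 2 :=
        Finset.sum_le_sum_of_subset_of_nonneg (Finset.subset_univ _) fun _ _ _ => sq_nonneg _
    _ ≤ Module.finrank 𝕜 W * ‖A‖ ^ 2 := sum_norm_starProjection_sq_le W A he

theorem IsCompactOperator.fastVolumeDecay (hA : IsCompactOperator A) : FastVolumeDecay A := by
  intro ε hε
  obtain ⟨M, hM⟩ := hA.exists_card_lt_norm_le (Real.sqrt_pos.mpr hε)
  set c := max 1 (‖A‖ ^ 2 / ε)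
  refine ⟨c ^ M, by positivity, fun N e he => ?_⟩
  set big := Finset.univ.filter fun k => √ε < ‖A (e k)‖
  have hfactor : ∀ k, ‖A (e k)‖ ^ 2 ≤ (if k ∈ big then c else 1) * ε := fun k => by
    split_ifs with hk
    · calc ‖A (e k)‖ ^ 2 ≤ ‖A‖ ^ 2 :=
            pow_le_pow_left₀ (norm_nonneg _) (by simpa [he.1 k] using A.le_opNorm (e k)) 2
        _ = ‖A‖ ^ 2 / ε * ε := by field_simp
        _ ≤ c * ε := by gcongr; exact le_max_right _ _
    · have hsmall : ‖A (e k)‖ ≤ √ε :=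
        not_lt.mp fun h => hk (Finset.mem_filter.mpr ⟨Finset.mem_univ _, h⟩)
      simpa using (Real.le_sqrt (norm_nonneg _) hε.le).mp hsmall
  calc gramDet 𝕜 (A ∘ e) ≤ ∏ k, ‖A (e k)‖ ^ 2 := gramDet_le_prod_norm_sq _
    _ ≤ ∏ k, (if k ∈ big then c else 1) * ε :=
        Finset.prod_le_prod (fun _ _ => sq_nonneg _) fun k _ => hfactor k
    _ = c ^ big.card * ε ^ N := by
        rw [Finset.prod_mul_distrib, Finset.prod_ite_mem, Finset.univ_inter, Finset.prod_const,
          Finset.prod_const, Finset.card_univ, Fintype.card_fin]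
    _ ≤ c ^ M * ε ^ N := by gcongr; exacts [le_max_left _ _, hM e he]

end Compact

section PrincipalSemigroupIdeal

variable {M : Type*} [Monoid M]

def principalSemigroupIdeal (S : Set M) (T : M) : Set M :=
  {W | ∃ X ∈ insert 1 S, ∃ Y ∈ insert 1 S, W = X * T * Y}

theorem mem_principalSemigroupIdeal_self (S : Set M) (T : M) : T ∈ principalSemigroupIdeal S T :=
  ⟨1, Set.mem_insert _ _, 1, Set.mem_insert _ _, by simp⟩

theorem isSemigroupIdeal_principalSemigroupIdeal {S : Set M} (hS : IsMulSemigroup S) {T : M}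
    (hT : T ∈ S) : IsSemigroupIdeal S (principalSemigroupIdeal S T) := by
  have hmul_left : ∀ X ∈ insert 1 S, ∀ Z ∈ S, X * Z ∈ S := by
    rintro X (rfl | hX) Z hZ
    exacts [by simpa using hZ, hS X hX Z hZ]
  have hmul_right : ∀ Z ∈ S, ∀ Y ∈ insert 1 S, Z * Y ∈ S := by
    rintro Z hZ Y (rfl | hY)
    exacts [by simpa using hZ, hS Z hZ Y hY]
  refine ⟨?_, ?_⟩
  · rintro W ⟨X, hX, Y, hY, rfl⟩
    exact hmul_right _ (hmul_left X hX T hT) Y hY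
  · rintro W ⟨X, hX, Y, hY, rfl⟩ Z hZ
    exact ⟨⟨Z * X, .inr (hmul_right Z hZ X hX), Y, hY, by simp only [mul_assoc]⟩,
      ⟨X, hX, Y * Z, .inr (hmul_left Y hY Z hZ), by simp only [mul_assoc]⟩⟩

end PrincipalSemigroupIdeal

/-- a semigroup of compact operators containing a nonselfadjoint
operator of infinite rank is not SI. -/
theorem stmt2 (S : Set (H →L[ℂ] H)) (hS : IsMulSemigroup S)
    (hcpt : ∀ A ∈ S, IsCompactOperator (⇑A))
    (T : H →L[ℂ] H) (hT : T ∈ S) (hTsa : T ≠ adjoint T)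
    (hrank : ¬ FiniteDimensional ℂ (LinearMap.range (T : H →ₗ[ℂ] H))) :
    ¬ IsSI S := by
  intro hSI
  obtain ⟨X, hX, Y, hY, hTX⟩ := hSI _ (isSemigroupIdeal_principalSemigroupIdeal hS hT) T
    (mem_principalSemigroupIdeal_self S T)
  have hcompact : IsCompactOperator X ∨ IsCompactOperator Y := by
    rcases hX with rfl | hX
    · rcases hY with rfl | hY
      · exact absurd (by simpa using hTX.symm) hTsa
      · exact .inr (hcpt Y hY)
    · exact .inl (hcpt X hX)
  have hT_eq : T = (adjoint Y * X) * T * (Y * adjoint X) := by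
    simp only [← star_eq_adjoint] at hTX ⊢
    calc T = star (star T) := (star_star T).symm
      _ = star Y * (X * T * Y) * star X := by rw [hTX, star_mul, star_mul, ← hTX, mul_assoc]
      _ = (star Y * X) * T * (Y * star X) := by simp only [mul_assoc]
  have hC := isCompactOperator_mul_of_or (hcompact.symm.imp IsCompactOperator.adjoint id)
  have hD := isCompactOperator_mul_of_or (hcompact.symm.imp id IsCompactOperator.adjoint)
  exact hrank (finiteDimensional_range_of_eq_mul_mul hC.fastVolumeDecay hD.fastVolumeDecay hT_eq)
end

section
/- Let H be a complex Hilbert space and let F(H) denote the set of finite-rank bounded operators on H. Then F(H), regarded as a multiplicative semigroup, is a selfadjoint-ideal (SI) semigroup: every ideal J of the semigroup F(H) satisfies T ∈ J implies T* ∈ J. -/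
/-!
Since `ker (T T*) = ker T*` and `T T*` has finite rank, `T*` factors as `X (T T*)` with `X` of
finite rank: define `X` on the range of `T T*` by `T T* x ↦ T* x` and extend it to `H` by a
continuous projection onto that finite-dimensional range. Then `T* = (X T) T*` lies in every
ideal containing `T`.
-/

open ContinuousLinearMap

variable {H : Type*} [NormedAddCommGroup H] [InnerProductSpace ℂ H] [CompleteSpace H]

namespace ContinuousLinearMap

variable {𝕜 E F G : Type*} [RCLike 𝕜] [NormedAddCommGroup E] [NormedSpace 𝕜 E]
  [NormedAddCommGroup F] [NormedSpace 𝕜 F] [NormedAddCommGroup G] [NormedSpace 𝕜 G]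

theorem exists_finiteDimensional_range_comp_eq_of_ker_le (A : E →L[𝕜] F) (S : E →L[𝕜] G)
    [FiniteDimensional 𝕜 A.range] (h : A.ker ≤ S.ker) :
    ∃ X : F →L[𝕜] G, FiniteDimensional 𝕜 X.range ∧ X ∘L A = S := by
  obtain ⟨P, hP⟩ := Submodule.ClosedComplemented.of_finiteDimensional A.range
  let g : A.range →ₗ[𝕜] G :=
    A.ker.liftQ (S : E →ₗ[𝕜] G) h ∘ₗ (A : E →ₗ[𝕜] F).quotKerEquivRange.symm.toLinearMap
  refine ⟨g.toContinuousLinearMap ∘L P, ?_, ?_⟩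
  · exact Submodule.finiteDimensional_of_le (LinearMap.range_comp_le_range _ g)
  · ext x
    have hAx : P (A x) = ⟨(A : E →ₗ[𝕜] F) x, LinearMap.mem_range_self _ x⟩ := hP ⟨A x, _⟩
    change g (P (A x)) = S x
    rw [hAx, LinearMap.comp_apply, LinearEquiv.coe_coe,
      LinearMap.quotKerEquivRange_symm_apply_image]
    rfl

end ContinuousLinearMap

/-- the semigroup `F(H)` of finite-rank operators is an SI semigroup:
every semigroup-ideal of `F(H)` is closed under adjoints. -/
theorem stmt3 :
    IsSI {T : H →L[ℂ] H | FiniteDimensional ℂ (LinearMap.range (T : H →ₗ[ℂ] H))} := by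
  rintro J ⟨hJS, hJ⟩ T hTJ
  have hT : FiniteDimensional ℂ T.range := hJS hTJ
  have : FiniteDimensional ℂ (T ∘L adjoint T).range :=
    Submodule.finiteDimensional_of_le (LinearMap.range_comp_le_range _ _)
  obtain ⟨X, hX, hXTT⟩ := (T ∘L adjoint T).exists_finiteDimensional_range_comp_eq_of_ker_le
    (adjoint T) (ker_self_comp_adjoint T).le
  have hadj : FiniteDimensional ℂ (adjoint T).range := by
    rw [← hXTT]
    exact Submodule.finiteDimensional_of_le (LinearMap.range_comp_le_range _ _)
  have hXT : X * T ∈ J := (hJ T hTJ X hX).1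
  have hfactor : X * T * adjoint T = adjoint T := hXTT
  exact hfactor ▸ (hJ _ hXT _ hadj).2
end

section
/- Let S be a multiplicative semigroup of bounded operators on a complex Hilbert space H that contains every partial isometry of B(H). Then S is a selfadjoint-ideal (SI) semigroup. -/
open ContinuousLinearMap

variable {H : Type*} [NormedAddCommGroup H] [InnerProductSpace ℂ H] [CompleteSpace H]

/-!
Polar decomposition `T = V |T|`, with `V` a partial isometry whose initial projection `V⋆V` fixes
`|T|`, gives `T⋆ = |T| V⋆ = V⋆ V |T| V⋆ = V⋆ T V⋆`. The adjoint `V⋆` of a partial isometry is again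
one, hence lies in `S`, and so `T⋆` lies in every ideal of `S` that contains `T`.
-/

def IsPartialIsometry {R : Type*} [Mul R] [Star R] (v : R) : Prop :=
  v * star v * v = v

theorem IsPartialIsometry.star {R : Type*} [Semigroup R] [StarMul R] {v : R}
    (hv : IsPartialIsometry v) : IsPartialIsometry (star v) := by
  unfold IsPartialIsometry at hv ⊢
  simpa [star_mul, mul_assoc] using congrArg Star.star hv

theorem star_eq_star_mul_mul_star {R : Type*} [Semigroup R] [StarMul R] {t v a : R}
    (ht : t = v * a) (ha : IsSelfAdjoint a) (hva : star v * v * a = a) :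
    star t = star v * t * star v := by
  rw [ht, star_mul, ha.star_eq]
  nth_rw 1 [← hva]
  simp only [mul_assoc]

section
variable {𝕜 E F G : Type*} [RCLike 𝕜]
  [NormedAddCommGroup E] [InnerProductSpace 𝕜 E]
  [NormedAddCommGroup F] [InnerProductSpace 𝕜 F]
  [NormedAddCommGroup G] [InnerProductSpace 𝕜 G]

theorem ContinuousLinearMap.norm_apply_eq_of_adjoint_comp_self_eq [CompleteSpace E]
    [CompleteSpace F] [CompleteSpace G] {A : E →L[𝕜] F} {T : E →L[𝕜] G}
    (h : adjoint A ∘L A = adjoint T ∘L T) (x : E) : ‖A x‖ = ‖T x‖ := by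
  rw [apply_norm_eq_sqrt_inner_adjoint_left, h, ← apply_norm_eq_sqrt_inner_adjoint_left]

theorem exists_isometry_comp_eq_of_norm_eq [CompleteSpace F] [CompleteSpace G] {A : E →L[𝕜] F}
    {T : E →L[𝕜] G} (h : ∀ x, ‖A x‖ = ‖T x‖) :
    ∃ (K : Submodule 𝕜 F) (_ : CompleteSpace K) (W : K →L[𝕜] G) (hA : ∀ x, A x ∈ K),
      (∀ y, ‖W y‖ = ‖y‖) ∧ ∀ x, W ⟨A x, hA x⟩ = T x := by
  let R := LinearMap.range (A : E →ₗ[𝕜] F)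
  have hA : ∀ x, A x ∈ R.topologicalClosure :=
    fun x => R.le_topologicalClosure (LinearMap.mem_range_self _ x)
  let e : E →ₗ[𝕜] R.topologicalClosure := (A : E →ₗ[𝕜] F).codRestrict _ hA
  have he : DenseRange e := by
    refine Subtype.dense_iff.mpr ?_
    rw [← Set.range_comp]
    exact subset_rfl
  have hbound : ∀ x, ‖(T : E →ₗ[𝕜] G) x‖ ≤ 1 * ‖e x‖ := fun x => by simp [e, h]
  refine ⟨R.topologicalClosure, R.isClosed_topologicalClosure.completeSpace_coe,
    (T : E →ₗ[𝕜] G).extendOfNorm e, hA, fun y => ?_, LinearMap.extendOfNorm_eq he ⟨1, hbound⟩⟩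
  refine he.induction ?_ (isClosed_eq (by fun_prop) continuous_norm) y
  rintro _ ⟨x, rfl⟩
  rw [LinearMap.extendOfNorm_eq he ⟨1, hbound⟩ x]
  exact (h x).symm

theorem adjoint_comp_self_isometry_comp_orthogonalProjectionOnto
    [CompleteSpace F] [CompleteSpace G] (K : Submodule 𝕜 F) [CompleteSpace K] {W : K →L[𝕜] G}
    (hW : ∀ y, ‖W y‖ = ‖y‖) :
    adjoint (W ∘L K.orthogonalProjectionOnto) ∘L (W ∘L K.orthogonalProjectionOnto) =
      K.starProjection := by
  rw [adjoint_comp, K.adjoint_orthogonalProjectionOnto, comp_assoc, ← comp_assoc _ W,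
    (norm_map_iff_adjoint_comp_self W).mp hW, one_def, id_comp]
  rfl

theorem exists_partialIsometry_comp_eq_of_norm_eq [CompleteSpace F] [CompleteSpace G]
    {A : E →L[𝕜] F} {T : E →L[𝕜] G} (h : ∀ x, ‖A x‖ = ‖T x‖) :
    ∃ V : F →L[𝕜] G, V ∘L (adjoint V ∘L V) = V ∧ V ∘L A = T ∧ (adjoint V ∘L V) ∘L A = A := by
  obtain ⟨K, _, W, hA, hW, hWA⟩ := exists_isometry_comp_eq_of_norm_eq h
  have hVV := adjoint_comp_self_isometry_comp_orthogonalProjectionOnto K hW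
  have hPA : K.starProjection ∘L A = A := ext fun x => K.starProjection_eq_self_iff.mpr (hA x)
  refine ⟨W ∘L K.orthogonalProjectionOnto, ?_, ext fun x => ?_, by rw [hVV, hPA]⟩
  · rw [hVV]
    ext x
    simp only [comp_apply, Submodule.starProjection_apply,
      Submodule.orthogonalProjectionOnto_mem_subspace_eq_self]
  · exact (congrArg W (K.orthogonalProjectionOnto_mem_subspace_eq_self ⟨A x, hA x⟩)).trans (hWA x)

end

theorem exists_polarDecomposition (T : H →L[ℂ] H) :
    ∃ V A : H →L[ℂ] H, IsPartialIsometry V ∧ IsSelfAdjoint A ∧ T = V * A ∧ star V * V * A = A := by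
  have hA : IsSelfAdjoint (CFC.abs T) := (CFC.abs_nonneg T).isSelfAdjoint
  have hnorm : ∀ x, ‖CFC.abs T x‖ = ‖T x‖ := by
    refine norm_apply_eq_of_adjoint_comp_self_eq ?_
    rw [← star_eq_adjoint, hA.star_eq]
    exact CFC.abs_mul_abs T
  obtain ⟨V, hV, hVA, hVVA⟩ := exists_partialIsometry_comp_eq_of_norm_eq hnorm
  exact ⟨V, CFC.abs T, hV, hA, hVA.symm, hVVA⟩

theorem stmt6_general (S : Set (H →L[ℂ] H))
    (hpi : ∀ T : H →L[ℂ] H, T = T * adjoint T * T → T ∈ S) :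
    IsSI S := by
  intro J hJ T hT
  obtain ⟨V, A, hV, hA, hVA, hVVA⟩ := exists_polarDecomposition T
  have hV' : adjoint V ∈ S := hpi _ hV.star.symm
  rw [← star_eq_adjoint, star_eq_star_mul_mul_star hVA hA hVVA]
  exact (hJ.2 _ (hJ.2 T hT _ hV').1 _ hV').2

/-- a semigroup containing every partial isometry of `B(H)` is an SI
semigroup. -/
theorem stmt6 (S : Set (H →L[ℂ] H)) (hS : IsMulSemigroup S)
    (hpi : ∀ T : H →L[ℂ] H, T = T * adjoint T * T → T ∈ S) :
    IsSI S :=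
  stmt6_general S hpi
end

section
/- Let T be a bounded operator on a complex Hilbert space H that is a power partial isometry, i.e., T^n = T^n (T^n)* T^n for every n ≥ 1. Then the semigroup S(T, T*) generated by T and T* is a selfadjoint-ideal (SI) semigroup. -/
set_option linter.unusedSectionVars false
namespace SIAux

section
variable {A : Type*} [NormedRing A] [StarRing A] [CStarRing A]

lemma mml {x y z : A} (h : x * y = z) (w : A) : x * (y * w) = z * w := by
  rw [← mul_assoc, h]

lemma mms {x y z u : A} (h : x * y = z * u) (w : A) :
    x * (y * w) = z * (u * w) := by rw [← mul_assoc, h, mul_assoc]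

lemma mml3 {x y z : A} (h : x * y * z = x) (w : A) : x * (y * (z * w)) = x * w := by
  rw [← mul_assoc, ← mul_assoc, h]

lemma eq_of_mul_star_sub {x y : A} (h : (x - y) * star (x - y) = 0) : x = y :=
  sub_eq_zero.mp ((CStarRing.mul_star_self_eq_zero_iff _).mp h)

/-- `E n = aⁿ (a*)ⁿ`. -/
def pe (a : A) (n : ℕ) : A := a ^ n * star a ^ n
/-- `F n = (a*)ⁿ aⁿ`. -/
def pf (a : A) (n : ℕ) : A := star a ^ n * a ^ n

/-- power partial isometry -/
def IsPPI (a : A) : Prop := ∀ n : ℕ, a ^ n * star a ^ n * a ^ n = a ^ n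

lemma pe_sf (a : A) (n : ℕ) : pe (star a) n = pf a n := by simp [pe, pf, star_star]
lemma pf_sf (a : A) (n : ℕ) : pf (star a) n = pe a n := by simp [pe, pf, star_star]
lemma pe_def (a : A) (n : ℕ) : a ^ n * star a ^ n = pe a n := rfl
lemma pf_def (a : A) (n : ℕ) : star a ^ n * a ^ n = pf a n := rfl
lemma star_pe (a : A) (n : ℕ) : star (pe a n) = pe a n := by
  simp [pe, star_mul, star_pow, star_star]
lemma star_pf (a : A) (n : ℕ) : star (pf a n) = pf a n := by
  simp [pf, star_mul, star_pow, star_star]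

variable {a : A}

lemma IsPPI.star (ha : IsPPI a) : IsPPI (star a) := by
  intro n
  have := congrArg Star.star (ha n)
  simpa [star_pow, star_star, star_mul, mul_assoc] using this

lemma pe_idem (ha : IsPPI a) (n : ℕ) : pe a n * pe a n = pe a n := by
  show a ^ n * star a ^ n * (a ^ n * star a ^ n) = a ^ n * star a ^ n
  rw [← mul_assoc, ha n]

lemma pf_idem (ha : IsPPI a) (n : ℕ) : pf a n * pf a n = pf a n := by
  simpa [pe_sf] using pe_idem ha.star n

lemma pe_mul_pow (ha : IsPPI a) (n : ℕ) : pe a n * a ^ n = a ^ n := ha n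

lemma pow_mul_pf (ha : IsPPI a) (n : ℕ) : a ^ n * pf a n = a ^ n := by
  have := ha n; rw [mul_assoc] at this; exact this

lemma pf_mul_spow (ha : IsPPI a) (n : ℕ) : pf a n * star a ^ n = star a ^ n := by
  simpa [pe_sf, star_star] using pe_mul_pow ha.star n

lemma spow_mul_pe (ha : IsPPI a) (n : ℕ) : star a ^ n * pe a n = star a ^ n := by
  simpa [pf_sf, star_star] using pow_mul_pf ha.star n

lemma pfpe_idem (ha : IsPPI a) (m n : ℕ) :
    pf a m * pe a n * (pf a m * pe a n) = pf a m * pe a n := by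
  have h1 : pf a m * pe a n = star a ^ m * (a ^ (m + n) * star a ^ n) := by
    simp [pf, pe, pow_add, mul_assoc]
  rw [h1]
  simp only [mul_assoc]
  have hs : star a ^ n * (star a ^ m * (a ^ (m + n) * star a ^ n))
      = star a ^ (m + n) * (a ^ (m + n) * star a ^ n) := by
    rw [← mul_assoc, ← pow_add, add_comm n m]
  rw [hs, mml3 (ha (m + n))]

lemma proj_comm {p q : A} (hp : p * p = p) (hps : star p = p)
    (hq : q * q = q) (hqs : star q = q) (h : p * q * (p * q) = p * q) :
    p * q = q * p := by
  have hA : p * (q * (p * q)) = p * q := by simpa [mul_assoc] using h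
  have key : (q * (p * q) - q * p) * star (q * (p * q) - q * p) = 0 := by
    have hst : star (q * (p * q) - q * p) = q * (p * q) - p * q := by
      simp [star_sub, star_mul, hps, hqs, mul_assoc]
    rw [hst, sub_mul, mul_sub, mul_sub]
    have t1 : q * (p * q) * (q * (p * q)) = q * (p * q) := by
      calc q * (p * q) * (q * (p * q)) = q * (p * (q * (q * (p * q)))) := by
            simp [mul_assoc]
        _ = q * (p * (q * (p * q))) := by rw [mml hq]
        _ = q * (p * q) := by rw [hA]
    have t2 : q * (p * q) * (p * q) = q * (p * q) := by
      calc q * (p * q) * (p * q) = q * (p * (q * (p * q))) := by simp [mul_assoc]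
        _ = q * (p * q) := by rw [hA]
    have t3 : q * p * (q * (p * q)) = q * (p * q) := by
      calc q * p * (q * (p * q)) = q * (p * (q * (p * q))) := by simp [mul_assoc]
        _ = q * (p * q) := by rw [hA]
    have t4 : q * p * (p * q) = q * (p * q) := by
      calc q * p * (p * q) = q * (p * (p * q)) := by simp [mul_assoc]
        _ = q * (p * q) := by rw [mml hp]
    rw [t1, t2, t3, t4]
    simp
  have h0 : q * (p * q) = q * p := eq_of_mul_star_sub key
  have h0' : q * (p * q) = p * q := by
    have := congrArg Star.star h0
    simpa [star_mul, hps, hqs, mul_assoc] using this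
  exact h0'.symm.trans h0

lemma comm (ha : IsPPI a) (m n : ℕ) : pf a m * pe a n = pe a n * pf a m :=
  proj_comm (pf_idem ha m) (star_pf a m) (pe_idem ha n) (star_pe a n) (pfpe_idem ha m n)


lemma shiftE (ha : IsPPI a) (n : ℕ) : a * pe a n = pe a (n + 1) * a := by
  have e1 : a ^ (n + 1) = a * a ^ n := pow_succ' a n
  have e2 : star a ^ (n + 1) = star a ^ n * star a := pow_succ (star a) n
  have hwitness : pe a (n + 1) * a = a * (pe a n * pf a 1) := by
    show a ^ (n+1) * star a ^ (n+1) * a = _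
    rw [e1, e2]
    simp [pe, pf, pow_one, mul_assoc]
  have hc : pf a 1 * pe a n = pe a n * pf a 1 := comm ha 1 n
  have hF1s : pf a 1 * star a = star a := by
    simpa [pow_one] using pf_mul_spow ha 1
  have inner : pf a 1 * (pe a n * star a) = pe a n * star a := by
    rw [mms hc, hF1s]
  have key : (a * (pe a n * pf a 1) - a * pe a n)
      * star (a * (pe a n * pf a 1) - a * pe a n) = 0 := by
    have hst : star (a * (pe a n * pf a 1) - a * pe a n)
        = pf a 1 * (pe a n * star a) - pe a n * star a := by
      simp [star_sub, star_mul, star_pe, star_pf, mul_assoc]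
    rw [hst, sub_mul, mul_sub, mul_sub]
    have t1 : a * (pe a n * pf a 1) * (pf a 1 * (pe a n * star a))
        = a * (pe a n * star a) := by
      calc a * (pe a n * pf a 1) * (pf a 1 * (pe a n * star a))
          = a * (pe a n * (pf a 1 * (pf a 1 * (pe a n * star a)))) := by simp [mul_assoc]
        _ = a * (pe a n * (pf a 1 * (pe a n * star a))) := by rw [mml (pf_idem ha 1)]
        _ = a * (pe a n * (pe a n * star a)) := by rw [inner]
        _ = a * (pe a n * star a) := by rw [mml (pe_idem ha n)]
    have t2 : a * (pe a n * pf a 1) * (pe a n * star a) = a * (pe a n * star a) := by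
      calc a * (pe a n * pf a 1) * (pe a n * star a)
          = a * (pe a n * (pf a 1 * (pe a n * star a))) := by simp [mul_assoc]
        _ = a * (pe a n * (pe a n * star a)) := by rw [inner]
        _ = a * (pe a n * star a) := by rw [mml (pe_idem ha n)]
    have t3 : a * pe a n * (pf a 1 * (pe a n * star a)) = a * (pe a n * star a) := by
      calc a * pe a n * (pf a 1 * (pe a n * star a))
          = a * (pe a n * (pf a 1 * (pe a n * star a))) := by simp [mul_assoc]
        _ = a * (pe a n * (pe a n * star a)) := by rw [inner]
        _ = a * (pe a n * star a) := by rw [mml (pe_idem ha n)]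
    have t4 : a * pe a n * (pe a n * star a) = a * (pe a n * star a) := by
      calc a * pe a n * (pe a n * star a)
          = a * (pe a n * (pe a n * star a)) := by simp [mul_assoc]
        _ = a * (pe a n * star a) := by rw [mml (pe_idem ha n)]
    rw [t1, t2, t3, t4]
    simp
  have h2 : a * (pe a n * pf a 1) = a * pe a n := eq_of_mul_star_sub key
  exact (hwitness.trans h2).symm

lemma shiftF (ha : IsPPI a) (n : ℕ) : star a * pf a n = pf a (n + 1) * star a := by
  simpa [pe_sf] using shiftE ha.star n

lemma shiftE' (ha : IsPPI a) (n : ℕ) : star a * pe a (n + 1) = pe a n * star a := by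
  have h := congrArg Star.star (shiftE ha n)
  simp only [star_mul, star_pe] at h
  exact h.symm

lemma shiftF' (ha : IsPPI a) (n : ℕ) : a * pf a (n + 1) = pf a n * a := by
  have h := congrArg Star.star (shiftF ha n)
  simp only [star_mul, star_pf, star_star] at h
  exact h.symm

lemma sE (ha : IsPPI a) (i : ℕ) : star a * pe a i = pe a (i - 1) * star a := by
  cases i with
  | zero => simp [pe]
  | succ n => simpa using shiftE' ha n

lemma aF (ha : IsPPI a) (j : ℕ) : a * pf a j = pf a (j - 1) * a := by
  cases j with
  | zero => simp [pf]
  | succ n => simpa using shiftF' ha n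

lemma pe_mul_pe_of_le (ha : IsPPI a) {m n : ℕ} (h : n ≤ m) :
    pe a m * pe a n = pe a m := by
  obtain ⟨k, rfl⟩ : ∃ k, m = k + n := ⟨m - n, by omega⟩
  have h1 : star a ^ n * (a ^ n * star a ^ n) = star a ^ n := by
    simpa [mul_assoc, star_star] using ha.star n
  calc pe a (k + n) * pe a n
      = a ^ (k + n) * (star a ^ k * (star a ^ n * (a ^ n * star a ^ n))) := by
        simp [pe, pow_add, mul_assoc]
    _ = a ^ (k + n) * (star a ^ k * star a ^ n) := by rw [h1]
    _ = pe a (k + n) := by simp [pe, pow_add, mul_assoc]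

lemma pe_mul_pe_of_le' (ha : IsPPI a) {m n : ℕ} (h : n ≤ m) :
    pe a n * pe a m = pe a m := by
  have := congrArg Star.star (pe_mul_pe_of_le ha h)
  simpa [star_mul, star_pe] using this

lemma pe_comm (ha : IsPPI a) (m n : ℕ) : pe a m * pe a n = pe a n * pe a m := by
  rcases le_total n m with h | h
  · rw [pe_mul_pe_of_le ha h, pe_mul_pe_of_le' ha h]
  · rw [pe_mul_pe_of_le ha h, pe_mul_pe_of_le' ha h]

lemma pf_mul_pf_of_le (ha : IsPPI a) {m n : ℕ} (h : n ≤ m) :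
    pf a m * pf a n = pf a m := by
  simpa [pe_sf] using pe_mul_pe_of_le ha.star h

lemma pf_comm (ha : IsPPI a) (m n : ℕ) : pf a m * pf a n = pf a n * pf a m := by
  simpa [pe_sf] using pe_comm ha.star m n


/-- Normal form: `x = E_i F_j a^k` or `x = E_i F_j (a*)^k`. -/
def NFp (a x : A) : Prop :=
  ∃ i j k : ℕ, x = pe a i * (pf a j * a ^ k) ∨ x = pe a i * (pf a j * star a ^ k)

lemma nfp_one : NFp a 1 := ⟨0, 0, 0, Or.inl (by simp [pe, pf])⟩

lemma nfp_mulA (ha : IsPPI a) {x : A} (h : NFp a x) : NFp a (a * x) := by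
  obtain ⟨i, j, k, h | h⟩ := h
  · refine ⟨i + 1, j - 1, k + 1, Or.inl ?_⟩
    subst h
    calc a * (pe a i * (pf a j * a ^ k))
        = pe a (i + 1) * (a * (pf a j * a ^ k)) := mms (shiftE ha i) _
      _ = pe a (i + 1) * (pf a (j - 1) * (a * a ^ k)) := by rw [mms (aF ha j)]
      _ = pe a (i + 1) * (pf a (j - 1) * a ^ (k + 1)) := by rw [← pow_succ']
  · cases k with
    | zero =>
      refine ⟨i + 1, j - 1, 1, Or.inl ?_⟩
      subst h
      calc a * (pe a i * (pf a j * star a ^ 0))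
          = pe a (i + 1) * (a * (pf a j * star a ^ 0)) := mms (shiftE ha i) _
        _ = pe a (i + 1) * (pf a (j - 1) * (a * star a ^ 0)) := by rw [mms (aF ha j)]
        _ = pe a (i + 1) * (pf a (j - 1) * a ^ 1) := by simp
    | succ k' =>
      refine ⟨i + 1, j - 1, k', Or.inr ?_⟩
      subst h
      have hsplit : a * star a ^ (k' + 1) = pe a 1 * star a ^ k' := by
        rw [pow_succ' (star a) k']
        simp [pe, pow_one, mul_assoc]
      calc a * (pe a i * (pf a j * star a ^ (k' + 1)))
          = pe a (i + 1) * (a * (pf a j * star a ^ (k' + 1))) := mms (shiftE ha i) _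
        _ = pe a (i + 1) * (pf a (j - 1) * (a * star a ^ (k' + 1))) := by rw [mms (aF ha j)]
        _ = pe a (i + 1) * (pf a (j - 1) * (pe a 1 * star a ^ k')) := by rw [hsplit]
        _ = pe a (i + 1) * (pe a 1 * (pf a (j - 1) * star a ^ k')) := by
            rw [mms (comm ha (j - 1) 1)]
        _ = pe a (i + 1) * (pf a (j - 1) * star a ^ k') := by
            rw [mml (pe_mul_pe_of_le ha (by omega))]

lemma nfp_mulS (ha : IsPPI a) {x : A} (h : NFp a x) : NFp a (star a * x) := by
  obtain ⟨i, j, k, h | h⟩ := h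
  · cases k with
    | zero =>
      refine ⟨i - 1, j + 1, 1, Or.inr ?_⟩
      subst h
      calc star a * (pe a i * (pf a j * a ^ 0))
          = pe a (i - 1) * (star a * (pf a j * a ^ 0)) := mms (sE ha i) _
        _ = pe a (i - 1) * (pf a (j + 1) * (star a * a ^ 0)) := by rw [mms (shiftF ha j)]
        _ = pe a (i - 1) * (pf a (j + 1) * star a ^ 1) := by simp
    | succ k' =>
      refine ⟨i - 1, j + 1, k', Or.inl ?_⟩
      subst h
      have hsplit : star a * a ^ (k' + 1) = pf a 1 * a ^ k' := by
        rw [pow_succ' a k']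
        simp [pf, pow_one, mul_assoc]
      calc star a * (pe a i * (pf a j * a ^ (k' + 1)))
          = pe a (i - 1) * (star a * (pf a j * a ^ (k' + 1))) := mms (sE ha i) _
        _ = pe a (i - 1) * (pf a (j + 1) * (star a * a ^ (k' + 1))) := by
            rw [mms (shiftF ha j)]
        _ = pe a (i - 1) * (pf a (j + 1) * (pf a 1 * a ^ k')) := by rw [hsplit]
        _ = pe a (i - 1) * (pf a (j + 1) * a ^ k') := by
            rw [mml (pf_mul_pf_of_le ha (by omega))]
  · refine ⟨i - 1, j + 1, k + 1, Or.inr ?_⟩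
    subst h
    calc star a * (pe a i * (pf a j * star a ^ k))
        = pe a (i - 1) * (star a * (pf a j * star a ^ k)) := mms (sE ha i) _
      _ = pe a (i - 1) * (pf a (j + 1) * (star a * star a ^ k)) := by rw [mms (shiftF ha j)]
      _ = pe a (i - 1) * (pf a (j + 1) * star a ^ (k + 1)) := by rw [← pow_succ']

lemma nfp_pi (ha : IsPPI a) {x : A} (h : NFp a x) : x * star x * x = x := by
  obtain ⟨i, j, k, h | h⟩ := h
  · subst h
    have hst : star (pe a i * (pf a j * a ^ k)) = star a ^ k * (pf a j * pe a i) := by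
      simp [star_mul, star_pe, star_pf, star_pow, mul_assoc]
    rw [hst]
    simp only [mul_assoc]
    rw [mml (pe_idem ha i), mms (comm ha j i), mml (pf_idem ha j),
      mml (pe_def a k), mms (pe_comm ha k i),
      mms (comm ha j i), mml (pe_idem ha i), mms ((comm ha j k).symm),
      mml (pf_idem ha j), pe_mul_pow ha k]
  · subst h
    have hst : star (pe a i * (pf a j * star a ^ k)) = a ^ k * (pf a j * pe a i) := by
      simp [star_mul, star_pe, star_pf, star_pow, star_star, mul_assoc]
    rw [hst]
    simp only [mul_assoc]
    rw [mml (pe_idem ha i), mms (comm ha j i), mml (pf_idem ha j),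
      mml (pf_def a k), mms (comm ha k i),
      mms (comm ha j i), mml (pe_idem ha i), mms (pf_comm ha k j),
      mml (pf_idem ha j), pf_mul_spow ha k]

lemma nfp_closure (ha : IsPPI a) {x : A}
    (hx : x ∈ Subsemigroup.closure ({a, star a} : Set A)) : NFp a x := by
  have key : ∀ y ∈ Subsemigroup.closure ({a, star a} : Set A),
      ∀ z : A, NFp a z → NFp a (y * z) := by
    intro y hy
    induction hy using Subsemigroup.closure_induction with
    | mem w hw =>
      rcases hw with rfl | hw
      · exact fun z hz => nfp_mulA ha hz
      · rw [Set.mem_singleton_iff] at hw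
        subst hw
        exact fun z hz => nfp_mulS ha hz
    | mul u v hu hv ihu ihv =>
      intro z hz
      rw [mul_assoc]
      exact ihu _ (ihv z hz)
  simpa using key x hx 1 nfp_one

lemma star_mem_closure {x : A}
    (hx : x ∈ Subsemigroup.closure ({a, star a} : Set A)) :
    star x ∈ Subsemigroup.closure ({a, star a} : Set A) := by
  induction hx using Subsemigroup.closure_induction with
  | mem w hw =>
    apply Subsemigroup.subset_closure
    rcases hw with rfl | hw
    · exact Or.inr rfl
    · rw [Set.mem_singleton_iff] at hw
      subst hw
      rw [star_star]
      exact Or.inl rfl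
  | mul u v hu hv ihu ihv =>
    rw [star_mul]
    exact mul_mem ihv ihu

end
end SIAux

open ContinuousLinearMap

variable {H : Type*} [NormedAddCommGroup H] [InnerProductSpace ℂ H] [CompleteSpace H]

/-- `S(T, T*)`: the semigroup generated by `T` and `T*`, i.e. all finite products
`A₁ ⋯ A_k` (`k ≥ 1`) with each `Aᵢ ∈ {T, T*}`. -/
noncomputable def genSG (T : H →L[ℂ] H) : Set (H →L[ℂ] H) :=
  (Subsemigroup.closure {T, adjoint T} : Subsemigroup (H →L[ℂ] H))

/-- if `T` is a power partial isometry then `S(T, T*)` is an SI semigroup. -/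
theorem stmt7 (T : H →L[ℂ] H)
    (hppi : ∀ n : ℕ, 1 ≤ n → T ^ n = T ^ n * adjoint (T ^ n) * T ^ n) :
    IsSI (genSG T) := by
  intro J hJ W hW
  have ha : SIAux.IsPPI T := by
    intro n
    rcases Nat.eq_zero_or_pos n with rfl | hn
    · simp
    · rw [← star_pow, star_eq_adjoint]
      exact (hppi n hn).symm
  have hgen : ({T, adjoint T} : Set (H →L[ℂ] H)) = {T, star T} := by
    rw [star_eq_adjoint]
  have hWgen : W ∈ genSG T := hJ.1 hW
  have hWS : W ∈ Subsemigroup.closure ({T, star T} : Set (H →L[ℂ] H)) := by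
    rw [← hgen]
    exact hWgen
  have hsWS : star W ∈ Subsemigroup.closure ({T, star T} : Set (H →L[ℂ] H)) :=
    SIAux.star_mem_closure hWS
  have hsW_gen : star W ∈ genSG T := by
    show star W ∈ (Subsemigroup.closure ({T, adjoint T} : Set (H →L[ℂ] H)) :
      Subsemigroup (H →L[ℂ] H))
    rw [hgen]
    exact hsWS
  have hPI : W * star W * W = W := SIAux.nfp_pi ha (SIAux.nfp_closure ha hWS)
  have hkey : star W = star W * W * star W := by
    have h := congrArg Star.star hPI
    simp only [star_mul, star_star] at h
    rw [← mul_assoc] at h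
    exact h.symm
  have step1 : star W * W ∈ J := (hJ.2 W hW (star W) hsW_gen).1
  have step2 : star W * W * star W ∈ J := (hJ.2 (star W * W) step1 (star W) hsW_gen).2
  rw [← star_eq_adjoint, hkey]
  exact step2
end

section
/- Let T be a bounded operator on a complex Hilbert space H that is normal (T T* = T* T) and not selfadjoint (T ≠ T*). Then the following are equivalent: (i) the semigroup S(T, T*) generated by T and T* is a selfadjoint-ideal (SI) semigroup; (ii) T is a partial isometry, i.e., T = T T* T (equivalently, T is unitarily equivalent to U ⊕ 0 with U a unitary operator); (iii) S(T, T*) is a simple semigroup. -/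
open ContinuousLinearMap

variable {H : Type*} [NormedAddCommGroup H] [InnerProductSpace ℂ H] [CompleteSpace H]

/-- `S` is simple: every ideal of `S` containing a nonzero element equals `S`. -/
def IsSimpleSemigroup {M : Type*} [Mul M] [Zero M] (S : Set M) : Prop :=
  ∀ J : Set M, IsSemigroupIdeal S J → (∃ T ∈ J, T ≠ 0) → J = S

/-! ### Auxiliary lemmas -/

namespace Stmt8Aux

/-- the basic word `T^m (T*)^n` -/
noncomputable def W (T : H →L[ℂ] H) (m n : ℕ) : H →L[ℂ] H := T ^ m * (star T) ^ n

lemma sq_of_pow (b : H →L[ℂ] H) {k : ℕ} (hk : 2 ≤ k)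
    (h : (star b * b) ^ k = star b * b) : (star b * b) ^ 2 = star b * b := by
  set A := star b * b with hA
  have hsa : IsSelfAdjoint A := IsSelfAdjoint.star_mul_self b
  have h1 : cfc (fun x : ℝ => x ^ k) A = cfc (id : ℝ → ℝ) A := by
    rw [cfc_pow_id A k, cfc_id ℝ A]; exact h
  have heq := (cfc_eq_cfc_iff_eqOn (a := A)).mp h1
  have h2 : cfc (fun x : ℝ => x ^ 2) A = cfc (id : ℝ → ℝ) A := by
    rw [cfc_eq_cfc_iff_eqOn (a := A)]
    intro x hx
    have hx0 : 0 ≤ x := spectrum_star_mul_self_nonneg x hx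
    have hxk : x ^ k = x := heq hx
    rcases eq_or_ne x 0 with h0 | h0
    · simp [h0]
    · have h3 : x ^ (k - 1) * x = x := by
        rw [← pow_succ, Nat.sub_add_cancel (by omega)]; exact hxk
      have h4 : x ^ (k - 1) = 1 := by
        have h3' : x ^ (k - 1) * x = 1 * x := by rw [one_mul]; exact h3
        exact mul_right_cancel₀ h0 h3'
      have h5 : x = 1 := by
        by_contra hne
        rcases lt_or_gt_of_ne hne with hlt | hgt
        · have := pow_lt_one₀ hx0 hlt (n := k - 1) (by omega)
          rw [h4] at this; linarith
        · have := one_lt_pow₀ hgt (n := k - 1) (by omega)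
          rw [h4] at this; linarith
      simp [h5]
  calc A ^ 2 = cfc (fun x : ℝ => x ^ 2) A := (cfc_pow_id A 2).symm
    _ = cfc (id : ℝ → ℝ) A := h2
    _ = A := cfc_id ℝ A

section words

variable {T : H →L[ℂ] H} (hc : Commute T (star T))

include hc in
lemma W_mul (a b c d : ℕ) : W T a b * W T c d = W T (a + c) (b + d) := by
  have h := (hc.symm.pow_pow b c).eq
  unfold W
  rw [pow_add, pow_add]
  calc T ^ a * star T ^ b * (T ^ c * star T ^ d)
      = T ^ a * (star T ^ b * T ^ c) * star T ^ d := by noncomm_ring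
    _ = T ^ a * (T ^ c * star T ^ b) * star T ^ d := by rw [h]
    _ = T ^ a * T ^ c * (star T ^ b * star T ^ d) := by noncomm_ring

lemma W_star (a b : ℕ) : star (W T a b) = W T b a := by
  unfold W
  rw [star_mul, star_pow, star_pow, star_star]

include hc in
lemma W_pow (k : ℕ) : (T * star T) ^ k = W T k k := by
  unfold W; exact hc.mul_pow k

lemma mem_genSG_of_W {m n : ℕ} (h : 1 ≤ m + n) : W T m n ∈ genSG T := by
  have hadj : adjoint T = star T := (star_eq_adjoint T).symm
  show W T m n ∈ Subsemigroup.closure {T, adjoint T}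
  rw [hadj]
  have hT : T ∈ Subsemigroup.closure {T, star T} :=
    Subsemigroup.subset_closure (Set.mem_insert _ _)
  have hS : star T ∈ Subsemigroup.closure {T, star T} :=
    Subsemigroup.subset_closure (Set.mem_insert_of_mem _ rfl)
  have hTk : ∀ k : ℕ, T ^ (k + 1) ∈ Subsemigroup.closure {T, star T} := by
    intro k
    induction k with
    | zero => simpa using hT
    | succ j ih => rw [pow_succ]; exact mul_mem ih hT
  have hSk : ∀ k : ℕ, star T ^ (k + 1) ∈ Subsemigroup.closure {T, star T} := by
    intro k
    induction k with
    | zero => simpa using hS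
    | succ j ih => rw [pow_succ]; exact mul_mem ih hS
  unfold W
  rcases m with _ | m
  · rcases n with _ | n
    · exact absurd h (by omega)
    · simpa using hSk n
  · rcases n with _ | n
    · simpa using hTk m
    · exact mul_mem (hTk m) (hSk n)

include hc in
lemma mem_genSG_iff {X : H →L[ℂ] H} :
    X ∈ genSG T ↔ ∃ m n : ℕ, 1 ≤ m + n ∧ X = W T m n := by
  constructor
  · intro hX
    have hadj : adjoint T = star T := (star_eq_adjoint T).symm
    have hX' : X ∈ Subsemigroup.closure {T, star T} := by
      have hX2 : X ∈ Subsemigroup.closure {T, adjoint T} := hX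
      rwa [hadj] at hX2
    clear hX
    induction hX' using Subsemigroup.closure_induction with
    | mem x hx =>
      rcases hx with hx | hx
      · exact ⟨1, 0, by omega, by simp [hx, W]⟩
      · exact ⟨0, 1, by omega, by simp [Set.mem_singleton_iff.mp hx, W]⟩
    | mul x y hx hy ihx ihy =>
      obtain ⟨a, b, hab, rfl⟩ := ihx
      obtain ⟨c, d, hcd, rfl⟩ := ihy
      exact ⟨a + c, b + d, by omega, W_mul hc a b c d⟩
  · rintro ⟨m, n, hmn, rfl⟩
    exact mem_genSG_of_W hmn

include hc in
lemma W_shift (hpi : T = T * star T * T) (a b : ℕ) (hab : 1 ≤ a + b) :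
    W T (a + 1) (b + 1) = W T a b := by
  have hTP : T * (T * star T) = T := by
    calc T * (T * star T) = T * (star T * T) := by rw [hc.eq]
      _ = T * star T * T := by rw [mul_assoc]
      _ = T := hpi.symm
  have hSP : star T * (T * star T) = star T := by
    have hst := congrArg star hTP
    rw [star_mul, star_mul, star_star] at hst
    calc star T * (T * star T) = (star T * T) * star T := by rw [mul_assoc]
      _ = (T * star T) * star T := by rw [← hc.eq]
      _ = star T := hst
  have hTP' : ∀ a : ℕ, T ^ (a + 1) * (T * star T) = T ^ (a + 1) := by
    intro a; rw [pow_succ, mul_assoc, hTP]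
  have hSP' : ∀ b : ℕ, star T ^ (b + 1) * (T * star T) = star T ^ (b + 1) := by
    intro b; rw [pow_succ, mul_assoc, hSP]
  have key : W T a b * (T * star T) = W T a b := by
    unfold W
    rcases b with _ | b
    · rcases a with _ | a
      · exact absurd hab (by omega)
      · simp only [pow_zero, mul_one]
        exact hTP' a
    · rw [mul_assoc, hSP' b]
  calc W T (a + 1) (b + 1) = W T a b * W T 1 1 := (W_mul hc a b 1 1).symm
    _ = W T a b * (T * star T) := by unfold W; rw [pow_one, pow_one]
    _ = W T a b := key

include hc in
lemma W_shift_k (hpi : T = T * star T * T) (a b : ℕ) (hab : 1 ≤ a + b) (k : ℕ) :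
    W T (a + k) (b + k) = W T a b := by
  induction k with
  | zero => rfl
  | succ j ih =>
    have hstep : W T (a + j + 1) (b + j + 1) = W T (a + j) (b + j) :=
      W_shift hc hpi (a + j) (b + j) (by omega)
    calc W T (a + (j + 1)) (b + (j + 1)) = W T (a + j + 1) (b + j + 1) := rfl
      _ = W T (a + j) (b + j) := hstep
      _ = W T a b := ih

include hc in
lemma partial_of_rep {p q : ℕ} (h : T = T ^ (p + 1) * star T ^ (q + 1)) :
    T = T * star T * T := by
  have hstar : star T = T ^ (q + 1) * star T ^ (p + 1) := by
    have hst := congrArg star h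
    rwa [star_mul, star_pow, star_pow, star_star] at hst
  set A := T * star T with hAdef
  have hApow : ∀ k : ℕ, A ^ k = W T k k := fun k => W_pow hc k
  have hA1 : A = W T 1 1 := by
    have h1 := hApow 1
    rwa [pow_one] at h1
  have hW : T = W T (p + 1) (q + 1) := by unfold W; exact h
  have hArep : A = A ^ (p + q + 2) := by
    calc A = star T * T := by rw [hAdef]; exact hc.eq
      _ = W T (q + 1) (p + 1) * W T (p + 1) (q + 1) := by
          unfold W
          rw [← hstar, ← h]
      _ = W T (p + q + 2) (p + q + 2) := by
          rw [W_mul hc, show q + 1 + (p + 1) = p + q + 2 from by omega,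
            show p + 1 + (q + 1) = p + q + 2 from by omega]
      _ = A ^ (p + q + 2) := (hApow _).symm
  have hA2 : A ^ 2 = A := by
    have hA' : A = star (star T) * star T := by rw [star_star]
    rw [hA'] at hArep ⊢
    exact sq_of_pow (star T) (by omega) hArep.symm
  have hW22 : W T 2 2 = W T 1 1 := by
    rw [← hApow 2, ← hApow 1, hA2, pow_one]
  have step1 : W T (p + 2) (q + 2) = T * star T * T := by
    have e1 : W T 1 1 * W T (p + 1) (q + 1) = W T (p + 2) (q + 2) := by
      rw [W_mul hc, show 1 + (p + 1) = p + 2 from by omega,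
        show 1 + (q + 1) = q + 2 from by omega]
    rw [← e1, ← hA1, ← hW, hAdef]
  have step2 : W T (p + 2) (q + 2) = W T (p + 1) (q + 1) := by
    calc W T (p + 2) (q + 2) = W T p q * W T 2 2 := (W_mul hc p q 2 2).symm
      _ = W T p q * W T 1 1 := by rw [hW22]
      _ = W T (p + 1) (q + 1) := W_mul hc p q 1 1
  rw [← step1, step2]
  exact hW

end words

end Stmt8Aux

open Stmt8Aux in
/-- for `T` normal and nonselfadjoint, TFAE:
(i) `S(T, T*)` is SI; (ii) `T` is a partial isometry (`T = T T* T`);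
(iii) `S(T, T*)` is simple. -/
theorem stmt8 (T : H →L[ℂ] H)
    (hnormal : T * adjoint T = adjoint T * T) (hnsa : T ≠ adjoint T) :
    List.TFAE [IsSI (genSG T), T = T * adjoint T * T, IsSimpleSemigroup (genSG T)] := by
  have hadj : adjoint T = star T := (star_eq_adjoint T).symm
  rw [hadj] at hnormal hnsa ⊢
  have hc : Commute T (star T) := hnormal
  tfae_have 1 → 2 := by
    intro hSI
    set J : Set (H →L[ℂ] H) := {X | ∃ m n : ℕ, 1 ≤ m ∧ X = W T m n} with hJdef
    have hJideal : IsSemigroupIdeal (genSG T) J := by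
      constructor
      · rintro X ⟨m, n, hm, rfl⟩
        exact mem_genSG_of_W (by omega)
      · rintro X ⟨m, n, hm, rfl⟩ Y hY
        obtain ⟨a, b, hab, rfl⟩ := (mem_genSG_iff hc).mp hY
        constructor
        · exact ⟨a + m, b + n, by omega, W_mul hc a b m n⟩
        · exact ⟨m + a, n + b, by omega, W_mul hc m n a b⟩
    have hTJ : T ∈ J := ⟨1, 0, le_refl 1, by simp [W]⟩
    have hstarJ := hSI J hJideal T hTJ
    rw [hadj] at hstarJ
    obtain ⟨m, n, hm, hrep⟩ := hstarJ
    have hrep' : T = W T n m := by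
      have hst := congrArg star hrep
      rwa [star_star, W_star] at hst
    obtain ⟨j, rfl⟩ := Nat.exists_eq_add_of_le hm
    rcases n with _ | k
    · rcases j with _ | i
      · exfalso
        apply hnsa
        simpa [W] using hrep'
      · rw [show 1 + (i + 1) = i + 2 from by omega] at hrep'
        have hrep0 : T = star T ^ (i + 2) := by simpa [W] using hrep'
        have hsT : star T = T ^ (i + 2) := by
          have hst := congrArg star hrep0
          rwa [star_pow, star_star] at hst
        have h1 : T = T ^ (i + 2) * star T ^ (i + 1) := by
          calc T = star T ^ (i + 2) := hrep0
            _ = star T * star T ^ (i + 1) := by rw [← pow_succ']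
            _ = T ^ (i + 2) * star T ^ (i + 1) := by rw [← hsT]
        exact partial_of_rep hc (p := i + 1) (q := i) h1
    · rw [show 1 + j = j + 1 from by omega] at hrep'
      exact partial_of_rep hc (p := k) (q := j) (by simpa [W] using hrep')
  tfae_have 2 → 1 := by
    intro hpi J hJ X hX
    obtain ⟨m, n, hmn, rfl⟩ := (mem_genSG_iff hc).mp (hJ.1 hX)
    have hZ : W T (2 * n) (2 * m) ∈ genSG T := mem_genSG_of_W (by omega)
    have hmem := (hJ.2 _ hX _ hZ).2
    have heq : W T m n * W T (2 * n) (2 * m) = W T n m := by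
      rw [W_mul hc, show m + 2 * n = n + (m + n) from by omega,
        show n + 2 * m = m + (m + n) from by omega,
        W_shift_k hc hpi n m (by omega) (m + n)]
    rw [heq] at hmem
    rw [← star_eq_adjoint, W_star]
    exact hmem
  tfae_have 2 → 3 := by
    intro hpi J hJ hex
    apply Set.Subset.antisymm hJ.1
    obtain ⟨X, hXJ, -⟩ := hex
    obtain ⟨m, n, hmn, hXW⟩ := (mem_genSG_iff hc).mp (hJ.1 hXJ)
    have hY : W T n m ∈ genSG T := mem_genSG_of_W (by omega)
    obtain ⟨s, hs⟩ : ∃ s, m + n = 1 + s := ⟨m + n - 1, by omega⟩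
    have hP : W T 1 1 ∈ J := by
      have hmem := (hJ.2 _ hXJ _ hY).2
      have heq : X * W T n m = W T 1 1 := by
        rw [hXW, W_mul hc, show m + n = 1 + s from hs,
          show n + m = 1 + s from by omega, W_shift_k hc hpi 1 1 (by omega) s]
      rwa [heq] at hmem
    intro Y hYS
    obtain ⟨a, b, hab, rfl⟩ := (mem_genSG_iff hc).mp hYS
    have hmem := (hJ.2 _ hP _ hYS).2
    have heq : W T 1 1 * W T a b = W T a b := by
      rw [W_mul hc, show 1 + a = a + 1 from by omega,
        show 1 + b = b + 1 from by omega, W_shift_k hc hpi a b hab 1]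
    rwa [heq] at hmem
  tfae_have 3 → 2 := by
    intro hsimple
    set J : Set (H →L[ℂ] H) := {X | ∃ m n : ℕ, 1 ≤ m ∧ 1 ≤ n ∧ X = W T m n} with hJdef
    have hJideal : IsSemigroupIdeal (genSG T) J := by
      constructor
      · rintro X ⟨m, n, hm, hn, rfl⟩
        exact mem_genSG_of_W (by omega)
      · rintro X ⟨m, n, hm, hn, rfl⟩ Y hY
        obtain ⟨a, b, hab, rfl⟩ := (mem_genSG_iff hc).mp hY
        constructor
        · exact ⟨a + m, b + n, by omega, by omega, W_mul hc a b m n⟩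
        · exact ⟨m + a, n + b, by omega, by omega, W_mul hc m n a b⟩
    have hT0 : T ≠ 0 := by
      intro h
      apply hnsa
      rw [h, star_zero]
    have hP0 : W T 1 1 ≠ 0 := by
      intro h
      apply hT0
      have h' : T * star T = 0 := by
        have hh := h
        unfold W at hh
        rwa [pow_one, pow_one] at hh
      have h'' : star T * T = 0 := by rw [← hc.eq]; exact h'
      have hnorm : ‖star T * T‖ = ‖T‖ * ‖T‖ := CStarRing.norm_star_mul_self
      rw [h''] at hnorm
      simp only [norm_zero] at hnorm
      have hnT : ‖T‖ = 0 := by nlinarith [norm_nonneg T]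
      exact norm_eq_zero.mp hnT
    have hPJ : W T 1 1 ∈ J := ⟨1, 1, le_refl 1, le_refl 1, rfl⟩
    have hJ_eq : J = genSG T := hsimple J hJideal ⟨W T 1 1, hPJ, hP0⟩
    have hTS : T ∈ genSG T := by
      have hT1 : T = W T 1 0 := by simp [W]
      rw [hT1]
      exact mem_genSG_of_W (by omega)
    rw [← hJ_eq] at hTS
    obtain ⟨m, n, hm, hn, hrep⟩ := hTS
    obtain ⟨p, hp⟩ := Nat.exists_eq_add_of_le hm
    obtain ⟨q, hq⟩ := Nat.exists_eq_add_of_le hn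
    rw [show m = p + 1 from by omega, show n = q + 1 from by omega] at hrep
    exact partial_of_rep hc (p := p) (q := q) (by simpa [W] using hrep)
  tfae_finish
end

section
/- Let T be a rank one bounded operator on a complex Hilbert space H with tr T = 0. Then the following are equivalent: (i) the semigroup S(T, T*) generated by T and T* is a selfadjoint-ideal (SI) semigroup; (ii) ‖T‖ = 1; (iii) S(T, T*) is a simple semigroup. -/
open ContinuousLinearMap
open scoped ComplexInnerProductSpace

variable {H : Type*} [NormedAddCommGroup H] [InnerProductSpace ℂ H] [CompleteSpace H]

/-!
Write `T x = ⟪g, x⟫ f` with `g = T* f`; the trace condition says `g ⊥ f`. With `c = ‖T‖ = ‖g‖`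
and `e = g / c` we get `T = c E` and `T* = c E*`, where `E x = ⟪e, x⟫ f` and `E*` multiply like
the matrix units `E₁₂`, `E₂₁`. Hence every element of `S(T, T*)` is `cⁿ u` with `n ≥ 1` and `u`
in the Brandt semigroup `B₂ = {0, E, E*, E E*, E* E}`.

If `c = 1` then `S(T, T*) ⊆ B₂`, and every nonzero element of `B₂` generates `E` and `E*` as an
ideal, so `S(T, T*)` is simple; a simple semigroup closed under adjoints is SI. If `c ≠ 1`, then
`T* = c E*` is not a product of two elements of `S(T, T*)`: compressing such a product `cⁿ u`
(`n ≥ 2`) by `E` on both sides gives `0` or `cⁿ E`, whereas `E T* E = c E`. So removing `T*`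
leaves an ideal that contains `T` but not `T*`.
-/

namespace IsSemigroupIdeal

variable {M : Type*} [Mul M]

theorem eq_closure {s J : Set M} (hJ : IsSemigroupIdeal (Subsemigroup.closure s : Set M) J)
    (hs : s ⊆ J) : J = Subsemigroup.closure s := by
  refine hJ.1.antisymm fun x hx => ?_
  induction hx using Subsemigroup.closure_induction with
  | mem x hx => exact hs hx
  | mul x y _ hy hxJ _ => exact (hJ.2 x hxJ y hy).2

theorem diff_singleton {S : Subsemigroup M} {x : M} (hx : ∀ X ∈ S, ∀ Y ∈ S, X * Y ≠ x) :
    IsSemigroupIdeal (S : Set M) (S \ {x}) :=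
  ⟨Set.sdiff_subset, fun T hT X hX =>
    ⟨⟨S.mul_mem hX hT.1, hx X hX T hT.1⟩, ⟨S.mul_mem hT.1 hX, hx T hT.1 X hX⟩⟩⟩

end IsSemigroupIdeal

theorem Subsemigroup.star_mem_closure {M : Type*} [Mul M] [StarMul M] {s : Set M}
    (hs : ∀ x ∈ s, star x ∈ s) {x : M} (hx : x ∈ closure s) : star x ∈ closure s := by
  induction hx using closure_induction with
  | mem x hx => exact subset_closure (hs x hx)
  | mul x y _ _ hx hy => rw [star_mul]; exact mul_mem hy hx

/-- `a` and `b` multiply like the matrix units `E₁₂` and `E₂₁`, so that `{0, a, b, a * b, b * a}`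
is the Brandt semigroup `B₂`. -/
structure IsBrandtPair {A : Type*} [Mul A] [Zero A] (a b : A) : Prop where
  left_mul_self : a * a = 0
  right_mul_self : b * b = 0
  left_mul_right_mul_left : a * (b * a) = a
  right_mul_left_mul_right : b * (a * b) = b

def brandtSet {A : Type*} [Mul A] [Zero A] (a b : A) : Set A := {0, a, b, a * b, b * a}

namespace IsBrandtPair

section SemigroupWithZero

variable {A : Type*} [SemigroupWithZero A] {a b : A}

theorem mul_mem_brandtSet (h : IsBrandtPair a b) {u v : A} (hu : u ∈ brandtSet a b)
    (hv : v ∈ brandtSet a b) : u * v ∈ brandtSet a b := by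
  have haa (x : A) : a * (a * x) = 0 := by rw [← mul_assoc, h.left_mul_self, zero_mul]
  have hbb (x : A) : b * (b * x) = 0 := by rw [← mul_assoc, h.right_mul_self, zero_mul]
  simp only [brandtSet, Set.mem_insert_iff, Set.mem_singleton_iff] at hu hv ⊢
  rcases hu with rfl | rfl | rfl | rfl | rfl <;> rcases hv with rfl | rfl | rfl | rfl | rfl <;>
    simp [mul_assoc, h.left_mul_self, h.right_mul_self, h.left_mul_right_mul_left,
      h.right_mul_left_mul_right, haa, hbb]

theorem closure_subset_brandtSet (h : IsBrandtPair a b) :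
    (Subsemigroup.closure {a, b} : Set A) ⊆ brandtSet a b :=
  Subsemigroup.closure_le (S := ⟨brandtSet a b, h.mul_mem_brandtSet⟩).2 <| by
    simp [Set.insert_subset_iff, brandtSet]

theorem left_mul_mul_left_eq_zero_or_eq (h : IsBrandtPair a b) {u : A}
    (hu : u ∈ brandtSet a b) : a * u * a = 0 ∨ a * u * a = a := by
  simp only [brandtSet, Set.mem_insert_iff, Set.mem_singleton_iff] at hu
  rcases hu with rfl | rfl | rfl | rfl | rfl <;>
    simp [mul_assoc, h.left_mul_self, h.left_mul_right_mul_left]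

theorem isSimpleSemigroup_closure (h : IsBrandtPair a b) :
    IsSimpleSemigroup (Subsemigroup.closure {a, b} : Set A) := by
  rintro J hJ ⟨X, hXJ, hX0⟩
  have ha : a ∈ Subsemigroup.closure {a, b} := Subsemigroup.subset_closure (by simp)
  have hb : b ∈ Subsemigroup.closure {a, b} := Subsemigroup.subset_closure (by simp)
  have haJ : a ∈ J := by
    have hX := h.closure_subset_brandtSet (hJ.1 hXJ)
    simp only [brandtSet, Set.mem_insert_iff, Set.mem_singleton_iff] at hX
    rcases hX with rfl | rfl | rfl | rfl | rfl
    · exact absurd rfl hX0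
    · exact hXJ
    · simpa [mul_assoc, h.left_mul_right_mul_left] using (hJ.2 _ (hJ.2 _ hXJ a ha).1 a ha).2
    · simpa [mul_assoc, h.left_mul_right_mul_left] using (hJ.2 _ hXJ a ha).2
    · simpa [h.left_mul_right_mul_left] using (hJ.2 _ hXJ a ha).1
  have hbJ : b ∈ J := by
    simpa [mul_assoc, h.right_mul_left_mul_right] using (hJ.2 _ (hJ.2 _ haJ b hb).1 b hb).2
  exact hJ.eq_closure (Set.insert_subset haJ (Set.singleton_subset_iff.2 hbJ))

theorem ne (h : IsBrandtPair a b) (ha : a ≠ 0) : a ≠ b := by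
  rintro rfl
  exact ha (by rw [← h.left_mul_right_mul_left, h.left_mul_self, mul_zero])

end SemigroupWithZero

section Algebra

variable {R A : Type*} [Field R] [Ring A] [Algebra R A] {a b : A}

theorem closure_smul_subset (h : IsBrandtPair a b) (c : R) :
    (Subsemigroup.closure {c • a, c • b} : Set A) ⊆
      {x | ∃ n : ℕ, ∃ u ∈ brandtSet a b, x = c ^ (n + 1) • u} := by
  intro x hx
  induction hx using Subsemigroup.closure_induction with
  | mem x hx =>
    rcases hx with rfl | rfl
    · exact ⟨0, a, by simp [brandtSet], by simp⟩
    · exact ⟨0, b, by simp [brandtSet], by simp⟩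
  | mul x y _ _ hx hy =>
    obtain ⟨m, u, hu, rfl⟩ := hx
    obtain ⟨n, v, hv, rfl⟩ := hy
    exact ⟨m + n + 1, u * v, h.mul_mem_brandtSet hu hv, by rw [smul_mul_smul_comm]; ring_nf⟩

theorem mul_ne_smul_right (h : IsBrandtPair a b) (ha : a ≠ 0) {c : R} (hc : c ≠ 0)
    (hc1 : ∀ n : ℕ, c ^ (n + 1) ≠ 1) {X Y : A} (hX : X ∈ Subsemigroup.closure {c • a, c • b})
    (hY : Y ∈ Subsemigroup.closure {c • a, c • b}) : X * Y ≠ c • b := by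
  intro hXY
  obtain ⟨m, u, hu, rfl⟩ := h.closure_smul_subset c hX
  obtain ⟨n, v, hv, rfl⟩ := h.closure_smul_subset c hY
  have hsandwich : c • a = c ^ (m + n + 2) • (a * (u * v) * a) := by
    calc c • a = a * (c • b) * a := by
          rw [mul_smul_comm, smul_mul_assoc, mul_assoc, h.left_mul_right_mul_left]
      _ = c ^ (m + n + 2) • (a * (u * v) * a) := by
          rw [← hXY, smul_mul_smul_comm, mul_smul_comm, smul_mul_assoc]; ring_nf
  rcases h.left_mul_mul_left_eq_zero_or_eq (h.mul_mem_brandtSet hu hv) with h0 | h1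
  · rw [h0, smul_zero, smul_eq_zero] at hsandwich
    exact hsandwich.elim hc ha
  · rw [h1] at hsandwich
    have hpow : c = c * c ^ (m + n + 1) := by
      rw [← pow_succ']; exact smul_left_injective R ha hsandwich
    exact hc1 (m + n) (by simpa [hc] using hpow)

end Algebra

end IsBrandtPair

namespace InnerProductSpace

variable {𝕜 E : Type*} [RCLike 𝕜] [NormedAddCommGroup E] [InnerProductSpace 𝕜 E]

theorem isBrandtPair_rankOne {f e : E} (hf : ‖f‖ = 1) (he : ‖e‖ = 1) (hef : ⟪e, f⟫_𝕜 = 0) :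
    IsBrandtPair (rankOne 𝕜 f e) (rankOne 𝕜 e f) := by
  have hfe : ⟪f, e⟫_𝕜 = 0 := by rw [← inner_conj_symm, hef, map_zero]
  constructor <;>
    simp [mul_def, rankOne_comp_rankOne, inner_self_eq_norm_sq_to_K, hf, he, hef, hfe]

theorem ne_zero_of_range_eq_span {T : E →L[𝕜] E} {f : E} (hf : f ≠ 0)
    (hrange : LinearMap.range (T : E →ₗ[𝕜] E) = Submodule.span 𝕜 {f}) : T ≠ 0 := by
  rintro rfl
  simp [eq_comm (a := ⊥), hf] at hrange

variable [CompleteSpace E]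

theorem eq_rankOne_adjoint_apply {T : E →L[𝕜] E} {f : E} (hf : ‖f‖ = 1)
    (hrange : LinearMap.range (T : E →ₗ[𝕜] E) = Submodule.span 𝕜 {f}) :
    T = rankOne 𝕜 f (adjoint T f) := by
  ext x
  obtain ⟨r, hr⟩ : ∃ r : 𝕜, r • f = T x :=
    Submodule.mem_span_singleton.1 (hrange ▸ LinearMap.mem_range_self (T : E →ₗ[𝕜] E) x)
  rw [rankOne_apply, adjoint_inner_left, ← hr, inner_smul_right, inner_self_eq_norm_sq_to_K, hf]
  simp

theorem exists_eq_norm_smul_rankOne {T : E →L[𝕜] E} {f : E} (hf : ‖f‖ = 1)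
    (hrange : LinearMap.range (T : E →ₗ[𝕜] E) = Submodule.span 𝕜 {f}) (htr : ⟪f, T f⟫_𝕜 = 0) :
    ∃ e : E, ‖e‖ = 1 ∧ ⟪e, f⟫_𝕜 = 0 ∧ T = (‖T‖ : 𝕜) • rankOne 𝕜 f e := by
  set g := adjoint T f
  have hT : T = rankOne 𝕜 f g := eq_rankOne_adjoint_apply hf hrange
  have hg : g ≠ 0 := by
    rintro hg
    refine ne_zero_of_range_eq_span (norm_ne_zero_iff.1 (hf ▸ one_ne_zero)) hrange ?_
    rw [hT, hg, map_zero]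
  refine ⟨(‖g‖⁻¹ : 𝕜) • g, norm_smul_inv_norm hg, ?_, ?_⟩
  · rw [inner_smul_left, adjoint_inner_left, htr, mul_zero]
  · rw [map_smulₛₗ, smul_smul, map_inv₀, RCLike.conj_ofReal, hT, norm_rankOne, hf, one_mul,
      mul_inv_cancel₀ (RCLike.ofReal_ne_zero.2 (norm_ne_zero_iff.2 hg)), one_smul]

end InnerProductSpace

theorem adjoint_mem_genSG {T X : H →L[ℂ] H} (hX : X ∈ genSG T) : adjoint X ∈ genSG T := by
  rw [← star_eq_adjoint]
  refine Subsemigroup.star_mem_closure ?_ hX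
  rintro Y (rfl | rfl) <;> simp [star_eq_adjoint]

theorem isSI_of_isSimpleSemigroup {S : Set (H →L[ℂ] H)} (hS : ∀ X ∈ S, adjoint X ∈ S)
    (h : IsSimpleSemigroup S) : IsSI S := by
  intro J hJ X hX
  by_cases hX0 : X = 0
  · simpa [hX0] using hX
  · have hJS : J = S := h J hJ ⟨X, hX, hX0⟩
    rw [hJS] at hX ⊢
    exact hS X hX

theorem tfae_genSG_smul_of_isBrandtPair {A : H →L[ℂ] H} (hA : IsBrandtPair A (adjoint A))
    (hA0 : A ≠ 0) {c : ℝ} (hc : 0 < c) :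
    List.TFAE [IsSI (genSG ((c : ℂ) • A)), c = 1, IsSimpleSemigroup (genSG ((c : ℂ) • A))] := by
  have hadj : adjoint ((c : ℂ) • A) = (c : ℂ) • adjoint A := by
    rw [map_smulₛₗ, Complex.conj_ofReal]
  have hS : genSG ((c : ℂ) • A) = Subsemigroup.closure {(c : ℂ) • A, (c : ℂ) • adjoint A} := by
    rw [genSG, hadj]
  have hc0 : (c : ℂ) ≠ 0 := Complex.ofReal_ne_zero.2 hc.ne'
  tfae_have 1 → 2 := by
    intro hSI
    by_contra hc1
    have hpow (n : ℕ) : (c : ℂ) ^ (n + 1) ≠ 1 := by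
      exact_mod_cast fun h => hc1 ((pow_eq_one_iff_of_nonneg hc.le n.succ_ne_zero).1 h)
    have hJ := IsSemigroupIdeal.diff_singleton fun X hX Y hY =>
      hA.mul_ne_smul_right hA0 hc0 hpow hX hY
    have hmem : (c : ℂ) • A ∈ (Subsemigroup.closure {(c : ℂ) • A, (c : ℂ) • adjoint A} : Set _) \
        {(c : ℂ) • adjoint A} :=
      ⟨Subsemigroup.subset_closure (by simp), (smul_right_injective _ hc0).ne (hA.ne hA0)⟩
    rw [hS] at hSI
    exact (hSI _ hJ _ hmem).2 hadj
  tfae_have 2 → 3 := by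
    rintro rfl
    simpa [genSG] using hA.isSimpleSemigroup_closure
  tfae_have 3 → 1 := isSI_of_isSimpleSemigroup fun _ => adjoint_mem_genSG
  tfae_finish

/-- for `T` rank one (its range is spanned by a unit vector `f`) with
`tr T = ⟨T f, f⟩ = 0`, TFAE: (i) `S(T, T*)` is SI; (ii) `‖T‖ = 1`;
(iii) `S(T, T*)` is simple.  (Note Mathlib's inner product is conjugate-linear in
the first slot, so the paper's `⟨T f, f⟩` is `⟪f, T f⟫`.) -/
theorem stmt9 (T : H →L[ℂ] H) (f : H) (hf : ‖f‖ = 1)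
    (hrange : LinearMap.range (T : H →ₗ[ℂ] H) = Submodule.span ℂ {f})
    (htr : ⟪f, T f⟫ = 0) :
    List.TFAE [IsSI (genSG T), ‖T‖ = 1, IsSimpleSemigroup (genSG T)] := by
  obtain ⟨e, he, hef, hT⟩ := InnerProductSpace.exists_eq_norm_smul_rankOne hf hrange htr
  have hf0 : f ≠ 0 := norm_ne_zero_iff.1 (hf ▸ one_ne_zero)
  have hTpos : 0 < ‖T‖ := norm_pos_iff.2 (InnerProductSpace.ne_zero_of_range_eq_span hf0 hrange)
  have hbrandt := InnerProductSpace.isBrandtPair_rankOne (𝕜 := ℂ) hf he hef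
  rw [← InnerProductSpace.adjoint_rankOne f e] at hbrandt
  have key := tfae_genSG_smul_of_isBrandtPair hbrandt
    (InnerProductSpace.rankOne_ne_zero hf0 (norm_ne_zero_iff.1 (he ▸ one_ne_zero))) hTpos
  rwa [← RCLike.ofReal_eq_complex_ofReal, ← hT] at key
end

section
/- Let T be a rank one selfadjoint bounded operator on a complex Hilbert space H with tr T ≠ 0. Then the semigroup S(T) = {T^n : n ≥ 1} is simple if and only if tr T ∈ {−1, 1}. -/
open ContinuousLinearMap
open scoped ComplexInnerProductSpace

variable {H : Type*} [NormedAddCommGroup H] [InnerProductSpace ℂ H] [CompleteSpace H]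

/-!
As `T` has rank one, `T * T = c • T` with `c = tr T`, so `T ^ (n + 1) = c ^ n • T`. If
`T ^ (p + 1) = T` for some `p ≥ 1`, every `T ^ m` is a multiple of any given `T ^ n`, so `S(T)` is
simple; conversely, simplicity forces the ideal `{T ^ n : n ≥ 2}` to contain `T`. Thus `S(T)` is
simple exactly when `c` is a root of unity, and `c` is real because `T` is selfadjoint.
-/

section PositivePowers

variable {M : Type*} [Monoid M]

/-- The semigroup `S(a) = {a ^ n : n ≥ 1}`. -/
def posPowers (a : M) : Set M := {x | ∃ n, 1 ≤ n ∧ x = a ^ n}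

lemma isSemigroupIdeal_posPowers_two_le (a : M) :
    IsSemigroupIdeal (posPowers a) {x | ∃ n, 2 ≤ n ∧ x = a ^ n} := by
  refine ⟨fun _ ⟨n, hn, hx⟩ => ⟨n, by omega, hx⟩, ?_⟩
  rintro _ ⟨n, hn, rfl⟩ _ ⟨m, -, rfl⟩
  exact ⟨⟨m + n, by omega, (pow_add a m n).symm⟩,
    ⟨n + m, by omega, (pow_add a n m).symm⟩⟩

lemma exists_pow_succ_eq_self_of_isSimpleSemigroup [Zero M] {a : M}
    (h : IsSimpleSemigroup (posPowers a)) (ha : a ^ 2 ≠ 0) :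
    ∃ p, 1 ≤ p ∧ a ^ (p + 1) = a := by
  have hJ := h _ (isSemigroupIdeal_posPowers_two_le a) ⟨a ^ 2, ⟨2, le_rfl, rfl⟩, ha⟩
  obtain ⟨n, hn, hna⟩ : a ∈ {x | ∃ n, 2 ≤ n ∧ x = a ^ n} :=
    hJ ▸ ⟨1, le_rfl, (pow_one a).symm⟩
  exact ⟨n - 1, by omega, by rw [Nat.sub_add_cancel (by omega), ← hna]⟩

lemma pow_one_add_mul_eq_self {a : M} {p : ℕ} (h : a ^ (p + 1) = a) (k : ℕ) :
    a ^ (1 + p * k) = a := by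
  induction k with
  | zero => simp
  | succ k ih => rw [mul_add_one, ← add_assoc, pow_add, ih, ← pow_succ', h]

lemma isSimpleSemigroup_posPowers_of_pow_succ_eq_self [Zero M] {a : M} {p : ℕ} (hp : 1 ≤ p)
    (h : a ^ (p + 1) = a) : IsSimpleSemigroup (posPowers a) := by
  rintro J ⟨hJS, hJ⟩ ⟨_, hx, -⟩
  obtain ⟨n, hn, rfl⟩ := hJS hx
  refine subset_antisymm hJS ?_
  rintro _ ⟨m, hm, rfl⟩
  have hfactor : a ^ m = a ^ (m + (p - 1) * n) * a ^ n := by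
    obtain ⟨q, rfl⟩ := Nat.exists_eq_add_of_le' hp
    obtain ⟨k, rfl⟩ := Nat.exists_eq_add_of_le' hm
    calc a ^ (k + 1) = a ^ k * a ^ (1 + (q + 1) * n) := by
          rw [pow_one_add_mul_eq_self h, pow_succ]
      _ = a ^ (k + 1 + (q + 1 - 1) * n) * a ^ n := by
          rw [← pow_add, ← pow_add, Nat.add_sub_cancel]; ring_nf
  rw [hfactor]
  exact (hJ _ hx _ ⟨_, by omega, rfl⟩).1

lemma isSimpleSemigroup_posPowers_iff [Zero M] {a : M} (ha : a ^ 2 ≠ 0) :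
    IsSimpleSemigroup (posPowers a) ↔ ∃ p, 1 ≤ p ∧ a ^ (p + 1) = a :=
  ⟨fun h => exists_pow_succ_eq_self_of_isSimpleSemigroup h ha,
    fun ⟨_, hp, h⟩ => isSimpleSemigroup_posPowers_of_pow_succ_eq_self hp h⟩

end PositivePowers

lemma pow_succ_eq_pow_smul_of_mul_self_eq_smul {R A : Type*} [CommMonoid R] [Monoid A]
    [MulAction R A] [IsScalarTower R A A] {a : A} {c : R} (h : a * a = c • a) (n : ℕ) :
    a ^ (n + 1) = c ^ n • a := by
  induction n with
  | zero => simp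
  | succ n ih => rw [pow_succ, ih, smul_mul_assoc, h, smul_smul, ← pow_succ]

lemma pow_succ_eq_self_iff_of_mul_self_eq_smul {K A : Type*} [Field K] [Ring A] [Module K A]
    [IsScalarTower K A A] {a : A} {c : K} (ha : a ≠ 0) (h : a * a = c • a) (p : ℕ) :
    a ^ (p + 1) = a ↔ c ^ p = 1 := by
  rw [pow_succ_eq_pow_smul_of_mul_self_eq_smul h, ← (smul_left_injective K ha).eq_iff, one_smul]

lemma exists_pow_eq_one_iff {R : Type*} [Ring R] [LinearOrder R] [IsStrictOrderedRing R] (r : R) :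
    (∃ p, 1 ≤ p ∧ r ^ p = 1) ↔ r = -1 ∨ r = 1 := by
  constructor
  · rintro ⟨p, hp, hr⟩
    rcases pow_eq_one_iff_cases.mp hr with h | h | h
    · omega
    · exact .inr h
    · exact .inl h.1
  · rintro (rfl | rfl) <;> exact ⟨2, by norm_num, by norm_num⟩

section RankOne

variable {𝕜 E : Type*} [RCLike 𝕜] [NormedAddCommGroup E] [InnerProductSpace 𝕜 E]

lemma eq_inner_smul_of_mem_span_singleton {f y : E} (hf : ‖f‖ = 1)
    (hy : y ∈ Submodule.span 𝕜 {f}) : y = inner 𝕜 f y • f := by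
  obtain ⟨b, rfl⟩ := Submodule.mem_span_singleton.mp hy
  rw [inner_smul_right, inner_self_eq_norm_sq_to_K, hf]
  simp

lemma mul_self_eq_inner_smul_of_range_le_span {T : E →L[𝕜] E} {f : E} (hf : ‖f‖ = 1)
    (hrange : LinearMap.range (T : E →ₗ[𝕜] E) ≤ Submodule.span 𝕜 {f}) :
    T * T = inner 𝕜 f (T f) • T := by
  have hT : ∀ x, T x = inner 𝕜 f (T x) • f := fun x =>
    eq_inner_smul_of_mem_span_singleton hf (hrange ⟨x, rfl⟩)
  ext x
  calc T (T x) = inner 𝕜 f (T x) • inner 𝕜 f (T f) • f := by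
        conv_lhs => rw [hT x]
        rw [map_smul, ← hT f]
    _ = inner 𝕜 f (T f) • T x := by rw [smul_comm, ← hT x]

end RankOne

/-- The paper's trace `⟨T f, f⟩` is `⟪f, T f⟫` in Mathlib's convention. -/
theorem stmt10 (T : H →L[ℂ] H) (hsa : T = adjoint T) (f : H) (hf : ‖f‖ = 1)
    (hrange : LinearMap.range (T : H →ₗ[ℂ] H) = Submodule.span ℂ {f})
    (htr : ⟪f, T f⟫ ≠ 0) :
    IsSimpleSemigroup {A : H →L[ℂ] H | ∃ n : ℕ, 1 ≤ n ∧ A = T ^ n} ↔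
      ⟪f, T f⟫ = -1 ∨ ⟪f, T f⟫ = 1 := by
  have hsq : T * T = ⟪f, T f⟫ • T := mul_self_eq_inner_smul_of_range_le_span hf hrange.le
  have hT : T ≠ 0 := by rintro rfl; simp at htr
  have hT2 : T ^ 2 ≠ 0 := by rw [sq, hsq]; exact smul_ne_zero htr hT
  have hreal : ((⟪f, T f⟫.re : ℝ) : ℂ) = ⟪f, T f⟫ :=
    IsSelfAdjoint.isSymmetric hsa.symm |>.coe_re_inner_self_apply f
  change IsSimpleSemigroup (posPowers T) ↔ _
  simp only [isSimpleSemigroup_posPowers_iff hT2,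
    pow_succ_eq_self_iff_of_mul_self_eq_smul hT hsq]
  rw [← hreal]
  exact_mod_cast exists_pow_eq_one_iff ⟪f, T f⟫.re
end

section
/- Let T be a rank one bounded operator on a complex Hilbert space H that is not normal (T T* ≠ T* T) and has tr T ≠ 0. Then the semigroup S(T, T*) generated by T and T* is a selfadjoint-ideal (SI) semigroup if and only if exactly one of the following two conditions holds: (a) the trace-norm condition: there exist integers m, n ≥ 0 with m + n ≥ 1 and l ≥ 1 such that (tr T)^m · (conjugate of tr T)^n · ‖T‖^{2l} = 1; (b) tr T is real and ‖T‖ = 1. -/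
open ContinuousLinearMap
open scoped ComplexInnerProductSpace

variable {H : Type*} [NormedAddCommGroup H] [InnerProductSpace ℂ H] [CompleteSpace H]

open InnerProductSpace

/-! With `e = T* f` we have `T = f ⊗ e` and `T* = e ⊗ f`, where `u ⊗ v = rankOne ℂ u v`, and
`(u ⊗ v)(u' ⊗ v') = ⟪v, u'⟫ (u ⊗ v')`. So every word in `T, T*` is a monomial `σ^i σ̄^j ε^k` in
`σ = ⟪e, f⟫ = tr T`, `σ̄ = ⟪f, e⟫` and `ε = ⟪e, e⟫ = ‖T‖²` times one of the four operators `u ⊗ v`,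
`u, v ∈ {e, f}`: the junctions `TT`, `T*T*`, `TT*` contribute `σ`, `σ̄`, `ε`.

A word that contains `T` and ends with `T*` has a junction `TT*`. Hence, if an ideal containing
`σ^p T = T^(p+1)` contains its adjoint `σ̄^p T*`, then `σ̄^p = σ^i σ̄^j ε^(k+1)` with `p ≤ i`.
For `p = 0` this is condition (a) unless `i = j = 0`, and then `‖T‖ = 1`; in that case `p = 1`
forces `σ̄ = σ`, since `0 < |σ| < ‖e‖ = 1` by the strict Cauchy–Schwarz inequality (`T` is not
normal exactly when `e ∉ ℂ f`). The same inequality makes (a) and (b) exclusive.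

Conversely, (a) multiplied by its conjugate, or (b), makes `σ^b σ̄^a` a monomial multiple of
`σ^a σ̄^b ε^d` for all `a, b, d`. This yields `W* = X W Y` for every `W = γ (u ⊗ v)` in the
semigroup, with `X, Y` words of type `v ⊗ u`, so every ideal is closed under adjoints. -/

theorem isSI_of_forall_exists_mul_mul_eq_adjoint {S : Set (H →L[ℂ] H)}
    (hS : ∀ W ∈ S, ∃ X ∈ S, ∃ Y ∈ S, X * W * Y = adjoint W) : IsSI S := by
  intro J hJ W hW
  obtain ⟨X, hX, Y, hY, hXWY⟩ := hS W (hJ.1 hW)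
  exact hXWY ▸ (hJ.2 _ (hJ.2 W hW X hX).1 Y hY).2

def CanSwapExponents {M : Type*} [CommMonoid M] (x y z : M) : Prop :=
  ∀ a b d : ℕ, ∃ i j k : ℕ, x ^ (a + i) * y ^ (b + j) * z ^ (k + d) = x ^ b * y ^ a

theorem canSwapExponents_of_pow_mul_pow_mul_pow_eq_one {M : Type*} [CommMonoid M] {x y z : M}
    {m l : ℕ} (hm : 1 ≤ m) (hl : 1 ≤ l) (h : x ^ m * y ^ m * z ^ l = 1) :
    CanSwapExponents x y z := by
  intro a b d
  -- multiply `x ^ b * y ^ a` by the `N`-th power of the unit, for `N` large enough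
  set N := a + b + d
  have hNm : N ≤ m * N := Nat.le_mul_of_pos_left N hm
  have hNl : N ≤ l * N := Nat.le_mul_of_pos_left N hl
  obtain ⟨i, hi⟩ := Nat.exists_eq_add_of_le (show a ≤ b + m * N by omega)
  obtain ⟨j, hj⟩ := Nat.exists_eq_add_of_le (show b ≤ a + m * N by omega)
  obtain ⟨k, hk⟩ := Nat.exists_eq_add_of_le (show d ≤ l * N by omega)
  refine ⟨i, j, k, ?_⟩
  rw [← hi, ← hj, add_comm k, ← hk]
  calc x ^ (b + m * N) * y ^ (a + m * N) * z ^ (l * N)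
      = x ^ b * y ^ a * (x ^ m * y ^ m * z ^ l) ^ N := by
        rw [pow_add, pow_add, pow_mul, pow_mul, pow_mul, mul_pow, mul_pow]; ac_rfl
    _ = x ^ b * y ^ a := by rw [h, one_pow, mul_one]

theorem canSwapExponents_self_one {M : Type*} [CommMonoid M] (x : M) :
    CanSwapExponents x x 1 :=
  fun a b _ => ⟨0, 0, 0, by simp [mul_comm]⟩

theorem eq_rankOne_adjoint_apply_of_range_le {T : H →L[ℂ] H} {f : H} (hf : ‖f‖ = 1)
    (hrange : LinearMap.range (T : H →ₗ[ℂ] H) ≤ Submodule.span ℂ {f}) :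
    T = rankOne ℂ f (adjoint T f) := by
  ext x
  obtain ⟨c, hc⟩ := Submodule.mem_span_singleton.1 (hrange (LinearMap.mem_range_self _ x))
  rw [rankOne_apply, adjoint_inner_left, ← ContinuousLinearMap.coe_coe, ← hc, inner_smul_right,
    inner_self_eq_norm_sq_to_K, hf]
  simp

omit [CompleteSpace H] in
theorem commute_rankOne_smul (a : ℂ) (f : H) :
    Commute (rankOne ℂ f (a • f)) (rankOne ℂ (a • f) f) := by
  simp only [map_smul, map_smulₛₗ, smul_apply]
  exact ((Commute.refl _).smul_left _).smul_right _

section GramMonomial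

omit [CompleteSpace H]

variable (e f : H)

noncomputable def gramMonomial (i j k : ℕ) : ℂ := ⟪e, f⟫ ^ i * ⟪f, e⟫ ^ j * ⟪e, e⟫ ^ k

/-- `true` stands for `f` and `false` for `e`, so that `T = pairRankOne e f true false`. -/
noncomputable def pairRankOne (b b' : Bool) : H →L[ℂ] H := rankOne ℂ (cond b f e) (cond b' f e)

variable {e f}

theorem gramMonomial_mul_gramMonomial (i j k i' j' k' : ℕ) :
    gramMonomial e f i j k * gramMonomial e f i' j' k' =
      gramMonomial e f (i + i') (j + j') (k + k') := by
  simp only [gramMonomial, pow_add]; ring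

theorem starRingEnd_gramMonomial (i j k : ℕ) :
    starRingEnd ℂ (gramMonomial e f i j k) = gramMonomial e f j i k := by
  simp only [gramMonomial, map_mul, map_pow, inner_conj_symm]
  ring

theorem norm_gramMonomial (i j k : ℕ) :
    ‖gramMonomial e f i j k‖ = ‖⟪e, f⟫‖ ^ (i + j) * ‖e‖ ^ (2 * k) := by
  simp [gramMonomial, norm_inner_symm f e, pow_add, pow_mul]

theorem inner_cond_cond (hf : ‖f‖ = 1) (b b' : Bool) :
    ⟪cond b f e, cond b' f e⟫ =
      gramMonomial e f (!b && b').toNat (b && !b').toNat (!b && !b').toNat := by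
  cases b <;> cases b' <;> simp [gramMonomial, hf]

theorem smul_pairRankOne_mul_smul_pairRankOne (hf : ‖f‖ = 1) (b₁ b₂ b₃ b₄ : Bool)
    (i j k i' j' k' : ℕ) :
    (gramMonomial e f i j k • pairRankOne e f b₁ b₂) *
        (gramMonomial e f i' j' k' • pairRankOne e f b₃ b₄) =
      gramMonomial e f (i + i' + (!b₂ && b₃).toNat) (j + j' + (b₂ && !b₃).toNat)
        (k + k' + (!b₂ && !b₃).toNat) • pairRankOne e f b₁ b₄ := by
  rw [mul_def, smul_comp, comp_smul, pairRankOne, pairRankOne, rankOne_comp_rankOne,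
    inner_cond_cond hf, smul_smul, smul_smul, gramMonomial_mul_gramMonomial,
    gramMonomial_mul_gramMonomial]
  rfl

theorem pairRankOne_eq_gramMonomial_smul (b b' : Bool) :
    pairRankOne e f b b' = gramMonomial e f 0 0 0 • pairRankOne e f b b' := by
  simp [gramMonomial]

theorem eq_of_smul_pairRankOne_eq (he : ∀ a : ℂ, a • f ≠ e) (hf : f ≠ 0) {c c' : ℂ}
    (hc : c ≠ 0) {b b' : Bool} (h : c • pairRankOne e f false true = c' • pairRankOne e f b b') :
    b = false ∧ b' = true ∧ c = c' := by
  have he0 : e ≠ 0 := fun h0 => he 0 (by rw [zero_smul, h0])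
  have hsmul (a : ℂ) (x y : H) : a • rankOne ℂ x y = rankOne ℂ (a • x) y := by
    rw [map_smul, smul_apply]
  simp only [pairRankOne, hsmul] at h
  obtain ⟨α, β, -, -, hce, hfv⟩ :=
    exists_of_rankOne_eq_rankOne (smul_ne_zero hc he0) hf h
  have hf_ne : ∀ a : ℂ, f ≠ a • e := fun a hfa => by
    have ha : a ≠ 0 := by rintro rfl; exact hf (by rw [hfa, zero_smul])
    exact he a⁻¹ (by rw [hfa, inv_smul_smul₀ ha])
  have he_ne : ∀ a : ℂ, c • e ≠ a • f := fun a hea =>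
    he (c⁻¹ * a) (by rw [mul_smul, ← hea, inv_smul_smul₀ hc])
  cases b <;> cases b' <;> simp only [cond_true, cond_false, smul_smul] at hce hfv h
  · exact absurd hfv (hf_ne _)
  · exact ⟨rfl, rfl, smul_left_injective ℂ (rankOne_ne_zero (𝕜 := ℂ) he0 hf)
    (by simpa only [hsmul] using h)⟩
  · exact absurd hce (he_ne _)
  · exact absurd hce (he_ne _)

theorem norm_inner_lt_norm (hf : ‖f‖ = 1) (he : ∀ a : ℂ, a • f ≠ e) :
    ‖⟪e, f⟫‖ < ‖e‖ := by
  refine lt_of_le_of_ne (by simpa [hf] using norm_inner_le_norm e f) fun h => ?_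
  rw [norm_inner_symm, ← one_mul ‖e‖, ← hf] at h
  rcases ((norm_inner_eq_norm_tfae ℂ f e).out 0 2).1 h with h0 | ⟨r, hr⟩
  · simp [h0] at hf
  · exact he r hr.symm

theorem not_exists_gramMonomial_eq_one_and_norm_eq_one (hf : ‖f‖ = 1) (he : ∀ a : ℂ, a • f ≠ e) :
    ¬((∃ m n l : ℕ, 1 ≤ m + n ∧ 1 ≤ l ∧ gramMonomial e f m n l = 1) ∧ ‖e‖ = 1) := by
  rintro ⟨⟨m, n, l, hmn, -, h⟩, he1⟩
  have hlt := norm_inner_lt_norm hf he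
  rw [he1] at hlt
  have := congrArg norm h
  rw [norm_gramMonomial, he1, one_pow, mul_one, norm_one] at this
  exact (pow_lt_one₀ (norm_nonneg _) hlt (by omega)).ne this

end GramMonomial

section Semigroup

variable {e f : H}

theorem adjoint_pairRankOne (b b' : Bool) :
    adjoint (pairRankOne e f b b') = pairRankOne e f b' b :=
  adjoint_rankOne _ _

theorem adjoint_smul_pairRankOne (i j k : ℕ) (b b' : Bool) :
    adjoint (gramMonomial e f i j k • pairRankOne e f b b') =
      gramMonomial e f j i k • pairRankOne e f b' b := by
  rw [← star_eq_adjoint, star_smul, star_eq_adjoint, adjoint_pairRankOne, ← starRingEnd_apply,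
    starRingEnd_gramMonomial]

/-- The `ε`-condition holds because a word that starts with `T` and ends with `T*` has a
junction `TT*`. -/
def monomialOps (e f : H) : Set (H →L[ℂ] H) :=
  {W | ∃ (b b' : Bool) (i j k : ℕ), W = gramMonomial e f i j k • pairRankOne e f b b' ∧
    (b = true → b' = true → 1 ≤ k)}

/-- Contains the ideal generated by `σ^p T`: a word containing `T` and ending with `T*` has a
junction `TT*`. -/
def monomialOpsIdeal (e f : H) (p : ℕ) : Set (H →L[ℂ] H) :=
  {W | ∃ (b b' : Bool) (i j k : ℕ), W = gramMonomial e f i j k • pairRankOne e f b b' ∧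
    p ≤ i ∧ (b' = true → 1 ≤ k)}

theorem genSG_subset_monomialOps (hf : ‖f‖ = 1) :
    genSG (pairRankOne e f true false) ⊆ monomialOps e f := by
  intro W hW
  induction hW using Subsemigroup.closure_induction with
  | mem W hW =>
    rcases hW with rfl | rfl
    · exact ⟨true, false, 0, 0, 0, pairRankOne_eq_gramMonomial_smul _ _, by simp⟩
    · refine ⟨false, true, 0, 0, 0, ?_, by simp⟩
      rw [adjoint_pairRankOne, ← pairRankOne_eq_gramMonomial_smul]
  | mul W W' _ _ hW hW' =>
    obtain ⟨b₁, b₂, i, j, k, rfl, h⟩ := hW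
    obtain ⟨b₃, b₄, i', j', k', rfl, h'⟩ := hW'
    refine ⟨b₁, b₄, _, _, _, smul_pairRankOne_mul_smul_pairRankOne hf .., ?_⟩
    cases b₁ <;> cases b₂ <;> cases b₃ <;> cases b₄ <;> simp_all <;> omega

theorem isSemigroupIdeal_genSG_inter_monomialOpsIdeal (hf : ‖f‖ = 1) (p : ℕ) :
    IsSemigroupIdeal (genSG (pairRankOne e f true false))
      (genSG (pairRankOne e f true false) ∩ monomialOpsIdeal e f p) := by
  refine ⟨Set.inter_subset_left, fun W ⟨hWS, hWJ⟩ X hXS =>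
    ⟨⟨mul_mem hXS hWS, ?_⟩, ⟨mul_mem hWS hXS, ?_⟩⟩⟩
  · obtain ⟨b₁, b₂, i, j, k, rfl, -⟩ := genSG_subset_monomialOps hf hXS
    obtain ⟨b₃, b₄, i', j', k', rfl, h'⟩ := hWJ
    refine ⟨b₁, b₄, _, _, _, smul_pairRankOne_mul_smul_pairRankOne hf .., ?_⟩
    cases b₁ <;> cases b₂ <;> cases b₃ <;> cases b₄ <;> simp_all <;> omega
  · obtain ⟨b₁, b₂, i, j, k, rfl, h⟩ := hWJ
    obtain ⟨b₃, b₄, i', j', k', rfl, h'⟩ := genSG_subset_monomialOps hf hXS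
    refine ⟨b₁, b₄, _, _, _, smul_pairRankOne_mul_smul_pairRankOne hf .., ?_⟩
    cases b₁ <;> cases b₂ <;> cases b₃ <;> cases b₄ <;> simp_all <;> omega

theorem gramMonomial_zero_smul_mem_genSG (b : Bool) :
    gramMonomial e f 0 0 0 • pairRankOne e f b (!b) ∈ genSG (pairRankOne e f true false) := by
  rw [← pairRankOne_eq_gramMonomial_smul]
  cases b
  · exact Subsemigroup.subset_closure (Set.mem_insert_of_mem _ (adjoint_pairRankOne _ _).symm)
  · exact Subsemigroup.subset_closure (Set.mem_insert _ _)

theorem gramMonomial_pow_smul_mem_genSG (hf : ‖f‖ = 1) (p : ℕ) :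
    gramMonomial e f p 0 0 • pairRankOne e f true false ∈
      genSG (pairRankOne e f true false) := by
  induction p with
  | zero => exact gramMonomial_zero_smul_mem_genSG true
  | succ p ih =>
    have hmul := mul_mem ih (gramMonomial_zero_smul_mem_genSG true)
    rw [Bool.not_true, smul_pairRankOne_mul_smul_pairRankOne hf] at hmul
    simpa [genSG] using hmul

theorem gramMonomial_succ_smul_mem_genSG (hf : ‖f‖ = 1) (b b' : Bool) (i j k : ℕ) :
    gramMonomial e f i j (k + 1) • pairRankOne e f b b' ∈
      genSG (pairRankOne e f true false) := by
  set S := genSG (pairRankOne e f true false)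
  have hT : gramMonomial e f 0 0 0 • pairRankOne e f true false ∈ S :=
    gramMonomial_zero_smul_mem_genSG true
  have hT' : gramMonomial e f 0 0 0 • pairRankOne e f false true ∈ S :=
    gramMonomial_zero_smul_mem_genSG false
  have hmul : ∀ {b₁ b₂ b₃ b₄ : Bool} {i j k i' j' k' : ℕ},
      gramMonomial e f i j k • pairRankOne e f b₁ b₂ ∈ S →
      gramMonomial e f i' j' k' • pairRankOne e f b₃ b₄ ∈ S →
      gramMonomial e f (i + i' + (!b₂ && b₃).toNat) (j + j' + (b₂ && !b₃).toNat)
        (k + k' + (!b₂ && !b₃).toNat) • pairRankOne e f b₁ b₄ ∈ S := fun hX hY =>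
    smul_pairRankOne_mul_smul_pairRankOne hf .. ▸ mul_mem hX hY
  have hub : ∀ i j k : ℕ, gramMonomial e f i j (k + 1) • pairRankOne e f true true ∈ S := by
    intro i j k
    induction i with
    | succ i ih => simpa [add_comm 1 i] using hmul hT ih
    | zero =>
      induction j with
      | succ j ih => simpa using hmul ih hT'
      | zero =>
        induction k with
        | zero => simpa using hmul hT hT'
        | succ k ih => simpa using hmul (hmul ih hT) hT'
  cases b <;> cases b'
  · simpa using hmul (hmul hT' (hub i j k)) hT
  · simpa using hmul hT' (hub i j k)
  · simpa using hmul (hub i j k) hT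
  · exact hub i j k

theorem exists_gramMonomial_eq_of_isSI (hf : ‖f‖ = 1) (he : ∀ a : ℂ, a • f ≠ e)
    (hσ : ⟪e, f⟫ ≠ 0) (hSI : IsSI (genSG (pairRankOne e f true false))) (p : ℕ) :
    ∃ i j k : ℕ, p ≤ i ∧ ⟪f, e⟫ ^ p = gramMonomial e f i j (k + 1) := by
  have hW : gramMonomial e f p 0 0 • pairRankOne e f true false ∈
      genSG (pairRankOne e f true false) ∩ monomialOpsIdeal e f p :=
    ⟨gramMonomial_pow_smul_mem_genSG hf p, true, false, p, 0, 0, rfl, le_rfl, by simp⟩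
  obtain ⟨-, b, b', i, j, k, hW', hi, hk⟩ :=
    hSI _ (isSemigroupIdeal_genSG_inter_monomialOpsIdeal hf p) _ hW
  rw [adjoint_smul_pairRankOne] at hW'
  have hσ' : ⟪f, e⟫ ≠ 0 := by rwa [← inner_conj_symm, map_ne_zero] at hσ
  have hc : gramMonomial e f 0 p 0 ≠ 0 := by simpa [gramMonomial] using pow_ne_zero p hσ'
  obtain ⟨rfl, rfl, hγ⟩ := eq_of_smul_pairRankOne_eq he (by rintro rfl; simp at hf) hc hW'
  obtain ⟨k, rfl⟩ := Nat.exists_eq_add_of_lt (hk rfl)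
  exact ⟨i, j, k, hi, by simpa [gramMonomial] using hγ⟩

theorem isSI_of_canSwapExponents (hf : ‖f‖ = 1)
    (h : CanSwapExponents ⟪e, f⟫ ⟪f, e⟫ ⟪e, e⟫) :
    IsSI (genSG (pairRankOne e f true false)) := by
  refine isSI_of_forall_exists_mul_mul_eq_adjoint fun W hW => ?_
  obtain ⟨u, v, a, b, c, rfl, -⟩ := genSG_subset_monomialOps hf hW
  obtain ⟨i, j, k, hijk⟩ := h a b (2 + (!u).toNat + (!v).toNat)
  refine ⟨_, gramMonomial_succ_smul_mem_genSG hf v u i j k,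
    _, gramMonomial_succ_smul_mem_genSG hf v u 0 0 0, ?_⟩
  rw [smul_pairRankOne_mul_smul_pairRankOne hf, smul_pairRankOne_mul_smul_pairRankOne hf,
    adjoint_smul_pairRankOne]
  congr 1
  simp only [gramMonomial, Bool.not_and_self, Bool.and_not_self, Bool.and_self,
    Bool.toNat_false] at hijk ⊢
  linear_combination ⟪e, e⟫ ^ c * hijk

theorem inner_swap_eq_of_isSI (hf : ‖f‖ = 1) (he : ∀ a : ℂ, a • f ≠ e) (hσ : ⟪e, f⟫ ≠ 0)
    (he1 : ‖e‖ = 1) (hSI : IsSI (genSG (pairRankOne e f true false))) :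
    ⟪f, e⟫ = ⟪e, f⟫ := by
  obtain ⟨i, j, k, hi, h⟩ := exists_gramMonomial_eq_of_isSI hf he hσ hSI 1
  have hρ : ‖⟪e, f⟫‖ ^ 1 = ‖⟪e, f⟫‖ ^ (i + j) := by
    simpa [norm_gramMonomial, he1, norm_inner_symm f e] using congrArg norm h
  have hρ1 : ‖⟪e, f⟫‖ ≠ 1 := (he1 ▸ norm_inner_lt_norm hf he).ne
  obtain ⟨rfl, rfl⟩ : i = 1 ∧ j = 0 := by
    have := pow_right_injective₀ (norm_pos_iff.2 hσ) hρ1 hρ; omega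
  simpa [gramMonomial, he1] using h

theorem isSI_genSG_pairRankOne_iff (hf : ‖f‖ = 1) (he : ∀ a : ℂ, a • f ≠ e)
    (hσ : ⟪e, f⟫ ≠ 0) :
    IsSI (genSG (pairRankOne e f true false)) ↔
      (∃ m n l : ℕ, 1 ≤ m + n ∧ 1 ≤ l ∧ gramMonomial e f m n l = 1) ∨
        (⟪f, e⟫ = ⟪e, f⟫ ∧ ‖e‖ = 1) := by
  constructor
  · intro hSI
    obtain ⟨m, n, l, -, h⟩ := exists_gramMonomial_eq_of_isSI hf he hσ hSI 0
    rcases Nat.eq_zero_or_pos (m + n) with hmn | hmn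
    · obtain ⟨rfl, rfl⟩ : m = 0 ∧ n = 0 := by omega
      have he1 : ‖e‖ = 1 := by
        refine (pow_eq_one_iff_of_nonneg (norm_nonneg e) (by omega : 2 * (l + 1) ≠ 0)).1 ?_
        simpa [norm_gramMonomial] using (congrArg norm h).symm
      exact Or.inr ⟨inner_swap_eq_of_isSI hf he hσ he1 hSI, he1⟩
    · exact Or.inl ⟨m, n, l + 1, hmn, le_add_self, by simpa using h.symm⟩
  · rintro (⟨m, n, l, hmn, hl, h⟩ | ⟨hswap, he1⟩)
    · refine isSI_of_canSwapExponents hf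
        (canSwapExponents_of_pow_mul_pow_mul_pow_eq_one hmn (by omega : 1 ≤ 2 * l) ?_)
      calc ⟪e, f⟫ ^ (m + n) * ⟪f, e⟫ ^ (m + n) * ⟪e, e⟫ ^ (2 * l)
          = gramMonomial e f m n l * starRingEnd ℂ (gramMonomial e f m n l) := by
            rw [starRingEnd_gramMonomial, gramMonomial_mul_gramMonomial, gramMonomial, two_mul,
              add_comm n m]
        _ = 1 := by rw [h, map_one, one_mul]
    · have hε : ⟪e, e⟫ = (1 : ℂ) := by simp [inner_self_eq_norm_sq_to_K, he1]
      exact isSI_of_canSwapExponents hf (hswap ▸ hε ▸ canSwapExponents_self_one _)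

end Semigroup

/-- for `T` rank one, non-normal, with `tr T ≠ 0`, the semigroup
`S(T, T*)` is SI iff exactly one of the following holds:
(a) the trace-norm condition `(tr T)^m · conj(tr T)^n · ‖T‖^(2l) = 1` for some
`m, n ≥ 0` with `m + n ≥ 1` and some `l ≥ 1`; or (b) `tr T` is real and `‖T‖ = 1`. -/
theorem stmt12 (T : H →L[ℂ] H)
    (hnn : T * adjoint T ≠ adjoint T * T)
    (f : H) (hf : ‖f‖ = 1)
    (hrange : LinearMap.range (T : H →ₗ[ℂ] H) = Submodule.span ℂ {f})
    (htr : ⟪f, T f⟫ ≠ 0) :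
    IsSI (genSG T) ↔
      Xor'
        (∃ m n l : ℕ, 1 ≤ m + n ∧ 1 ≤ l ∧
          ⟪f, T f⟫ ^ m * (starRingEnd ℂ) ⟪f, T f⟫ ^ n * (‖T‖ : ℂ) ^ (2 * l) = 1)
        ((starRingEnd ℂ) ⟪f, T f⟫ = ⟪f, T f⟫ ∧ ‖T‖ = 1) := by
  set e := adjoint T f
  have hT : T = pairRankOne e f true false := eq_rankOne_adjoint_apply_of_range_le hf hrange.le
  have he : ∀ a : ℂ, a • f ≠ e := fun a hae =>
    hnn (by rw [hT, pairRankOne, adjoint_rankOne, cond_true, cond_false, ← hae];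
            exact commute_rankOne_smul a f)
  have hσ : ⟪f, T f⟫ = ⟪e, f⟫ := by
    rw [hT, pairRankOne, cond_true, cond_false, rankOne_apply, inner_smul_right,
      inner_self_eq_norm_sq_to_K, hf]
    simp
  have hnorm : ‖T‖ = ‖e‖ := by
    rw [hT, pairRankOne, cond_true, cond_false, norm_rankOne, hf, one_mul]
  have hε (l : ℕ) : (‖T‖ : ℂ) ^ (2 * l) = ⟪e, e⟫ ^ l := by
    rw [hnorm, pow_mul, inner_self_eq_norm_sq_to_K]; rfl
  simp only [hσ, inner_conj_symm, hε]
  rw [hnorm, hT, isSI_genSG_pairRankOne_iff hf he (hσ ▸ htr)]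
  refine Iff.trans ?_ (xor_iff_or_and_not_and _ _).symm
  exact (and_iff_left fun ⟨ha, hb⟩ =>
    not_exists_gramMonomial_eq_one_and_norm_eq_one hf he ⟨ha, hb.2⟩).symm
end

section
/- Let T be a rank one bounded operator on a complex Hilbert space H that is not selfadjoint (T ≠ T*). Then the semigroup S(T, T*) generated by T and T* is a selfadjoint-ideal (SI) semigroup that is not simple if and only if T is not normal (T T* ≠ T* T), tr T is real with tr T ∉ {0, 1, −1}, and ‖T‖ = 1. -/
/-!
Write `T = |f⟩⟨g|` with `‖f‖ = 1`, so that `tr T = L := ⟪g, f⟫` and `‖T‖² = N := ‖g‖²`.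
Every element of `S(T, T*)` is `m • |a⟩⟨b|` with `a, b ∈ {f, g}` and `m` a monomial `L^i L̄^j N^k`,
and every such operator whose coefficient carries a factor `N` lies in `S(T, T*)`. Hence
`S(T, T*)` is simple as soon as the nonzero monomials are invertible among the monomials: any
element is then carried to any other by multiplication on both sides.

If `f, g` are independent (`T` is not normal), the four operators `|a⟩⟨b|` are linearly
independent, and the SI property, applied to the ideal of words involving `T` and to the
principal ideal of `T² = L T`, gives `1 = N m` and `L̄ = L N m'` for monomials `m, m'`. Unless
the monomials are invertible, this forces `N = 1`, `L̄ = L` and `|L| ≠ 0, 1`. Conversely, under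
these conditions every coefficient is real, so `Z* = |b⟩⟨a| Z |b⟩⟨a|` lies in every ideal
containing `Z = m • |a⟩⟨b|`, while `T` is not in the ideal of `T²`, whose coefficients are the
powers `L^(n+1)`.

In the normal case `g = c f`, the identity `⟪f, A T B f⟫ = c̄ ⟪f, B f⟫ ⟪f, A f⟫` shows that
`T* = c |f⟩⟨f|` lies in the ideal of `T` only if `|c| = 1`, when `S(T, T*)` is simple, or `c` is
real, when `T = T*`.
-/

open ContinuousLinearMap
open scoped ComplexInnerProductSpace

variable {H : Type*} [NormedAddCommGroup H] [InnerProductSpace ℂ H] [CompleteSpace H]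

open InnerProductSpace ComplexConjugate Pointwise

section PrincipalIdeal

variable {M : Type*} [Monoid M]

def principalIdeal (S : Set M) (Z : M) : Set M :=
  {W | ∃ A ∈ insert 1 S, ∃ B ∈ insert 1 S, W = A * Z * B}

theorem self_mem_principalIdeal (S : Set M) (Z : M) : Z ∈ principalIdeal S Z :=
  ⟨1, Set.mem_insert _ _, 1, Set.mem_insert _ _, by rw [one_mul, mul_one]⟩

variable {S : Subsemigroup M}

theorem mul_mem_of_mem_insert_one {A X : M} (hA : A ∈ insert 1 (S : Set M)) (hX : X ∈ S) :
    A * X ∈ S ∧ X * A ∈ S := by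
  rcases hA with rfl | hA
  · simpa using hX
  · exact ⟨mul_mem hA hX, mul_mem hX hA⟩

theorem principalIdeal_subset {Z : M} (hZ : Z ∈ S) : principalIdeal S Z ⊆ S := by
  rintro _ ⟨A, hA, B, hB, rfl⟩
  exact (mul_mem_of_mem_insert_one hB (mul_mem_of_mem_insert_one hA hZ).1).2

theorem isSemigroupIdeal_principalIdeal {Z : M} (hZ : Z ∈ S) :
    IsSemigroupIdeal (S : Set M) (principalIdeal S Z) := by
  refine ⟨principalIdeal_subset hZ, ?_⟩
  rintro _ ⟨A, hA, B, hB, rfl⟩ X hX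
  refine ⟨⟨X * A, .inr ?_, B, hB, by simp only [mul_assoc]⟩,
    ⟨A, hA, B * X, .inr ?_, by simp only [mul_assoc]⟩⟩
  · exact (mul_mem_of_mem_insert_one hA hX).2
  · exact (mul_mem_of_mem_insert_one hB hX).1

theorem principalIdeal_subset_of_isSemigroupIdeal {J : Set M} (hJ : IsSemigroupIdeal (S : Set M) J)
    {Z : M} (hZ : Z ∈ J) : principalIdeal S Z ⊆ J := by
  have hmul : ∀ A ∈ insert 1 (S : Set M), ∀ W ∈ J, A * W ∈ J ∧ W * A ∈ J := by
    rintro A (rfl | hA) W hW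
    · simpa using hW
    · exact ⟨(hJ.2 W hW A hA).1, (hJ.2 W hW A hA).2⟩
  rintro _ ⟨A, hA, B, hB, rfl⟩
  exact (hmul B hB _ (hmul A hA Z hZ).1).2

end PrincipalIdeal

section Monomials

def monomials (L : ℂ) (N : ℝ) : Submonoid ℂ :=
  Submonoid.closure {L, conj L, (N : ℂ)}

variable {L x : ℂ} {N : ℝ}

theorem mem_monomials :
    x ∈ monomials L N ↔ ∃ i j k : ℕ, L ^ i * conj L ^ j * (N : ℂ) ^ k = x := by
  rw [monomials, ← Set.singleton_union, Submonoid.closure_union, Submonoid.mem_sup]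
  simp_rw [Submonoid.mem_closure_singleton, Submonoid.mem_closure_pair]
  constructor
  · rintro ⟨_, ⟨i, rfl⟩, _, ⟨j, k, rfl⟩, rfl⟩
    exact ⟨i, j, k, mul_assoc _ _ _⟩
  · rintro ⟨i, j, k, rfl⟩
    exact ⟨_, ⟨i, rfl⟩, _, ⟨j, k, rfl⟩, (mul_assoc _ _ _).symm⟩

theorem self_mem_monomials : L ∈ monomials L N := Submonoid.subset_closure (by simp)

theorem conj_self_mem_monomials : conj L ∈ monomials L N := Submonoid.subset_closure (by simp)

theorem ofReal_mem_monomials : (N : ℂ) ∈ monomials L N := Submonoid.subset_closure (by simp)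

theorem conj_mem_monomials (hx : x ∈ monomials L N) : conj x ∈ monomials L N := by
  obtain ⟨i, j, k, rfl⟩ := mem_monomials.1 hx
  refine mem_monomials.2 ⟨j, i, k, ?_⟩
  simp only [map_mul, map_pow, Complex.conj_conj, Complex.conj_ofReal]
  ring

theorem conj_eq_of_mem_monomials (hL : conj L = L) (hx : x ∈ monomials L N) : conj x = x := by
  obtain ⟨i, j, k, rfl⟩ := mem_monomials.1 hx
  simp only [map_mul, map_pow, hL, Complex.conj_ofReal]

theorem inv_mem_monomials (hL : L ≠ 0 → L⁻¹ ∈ monomials L N) (hN : (N : ℂ)⁻¹ ∈ monomials L N)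
    (hx : x ∈ monomials L N) (hx0 : x ≠ 0) : x⁻¹ ∈ monomials L N := by
  induction hx using Submonoid.closure_induction with
  | mem y hy =>
    rcases hy with rfl | rfl | rfl
    · exact hL hx0
    · rw [← map_inv₀]
      exact conj_mem_monomials (hL (by simpa using hx0))
    · exact hN
  | one => simp
  | mul y z _ _ hy hz =>
    rw [mul_inv]
    exact mul_mem (hy (left_ne_zero_of_mul hx0)) (hz (right_ne_zero_of_mul hx0))

theorem monomials_le_monomials_one : monomials L (‖L‖ ^ 2) ≤ monomials L 1 := by
  rw [monomials, Submonoid.closure_le]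
  rintro y (rfl | rfl | rfl)
  · exact self_mem_monomials
  · exact conj_self_mem_monomials
  · rw [Complex.ofReal_pow, ← Complex.mul_conj']
    exact mul_mem self_mem_monomials conj_self_mem_monomials

theorem eq_one_of_mem_monomials_one (hL1 : ‖L‖ ≠ 1) (hx : x ∈ monomials L 1)
    (hx1 : ‖x‖ = 1) : x = 1 := by
  obtain ⟨i, j, k, rfl⟩ := mem_monomials.1 hx
  have hij : i + j = 0 := by
    by_contra h
    refine hL1 ((pow_eq_one_iff_of_nonneg (norm_nonneg L) h).1 ?_)
    simpa [pow_add] using hx1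
  simp [Nat.eq_zero_of_add_eq_zero_right hij, Nat.eq_zero_of_add_eq_zero_left hij]

theorem eq_one_of_inv_notMem_monomials (hN : 0 ≤ N) (hL : L⁻¹ ∉ monomials L N)
    (h : ∃ m ∈ monomials L N, (N : ℂ) * m = 1) : N = 1 := by
  obtain ⟨m, hm, h⟩ := h
  obtain ⟨i, j, k, rfl⟩ := mem_monomials.1 hm
  have hmem : ∀ i j, L ^ i * conj L ^ j * (N : ℂ) ^ (k + 1) ∈ monomials L N :=
    fun i j ↦ mem_monomials.2 ⟨i, j, k + 1, rfl⟩
  rcases i with _ | i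
  · rcases j with _ | j
    · have hk : N ^ (k + 1) = 1 := by exact_mod_cast (by rw [← h]; ring : (N : ℂ) ^ (k + 1) = 1)
      exact (pow_eq_one_iff_of_nonneg hN k.succ_ne_zero).1 hk
    · refine absurd ?_ hL
      have h' : (conj L)⁻¹ ∈ monomials L N := by
        rw [inv_eq_of_mul_eq_one_right (b := conj L ^ j * (N : ℂ) ^ (k + 1)) (by rw [← h]; ring)]
        simpa using hmem 0 j
      simpa using conj_mem_monomials h'
  · refine absurd ?_ hL
    rw [inv_eq_of_mul_eq_one_right (b := L ^ i * conj L ^ j * (N : ℂ) ^ (k + 1))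
      (by rw [← h]; ring)]
    exact hmem i j

theorem inv_mem_monomials_or (hN : 0 ≤ N) (h₁ : ∃ m ∈ monomials L N, (N : ℂ) * m = 1)
    (h₂ : ∃ m ∈ monomials L N, conj L = L * (N * m)) :
    (∀ x ∈ monomials L N, x ≠ 0 → x⁻¹ ∈ monomials L N) ∨
      (N = 1 ∧ conj L = L ∧ L ≠ 0 ∧ ‖L‖ ≠ 1) := by
  by_cases hL : L⁻¹ ∈ monomials L N
  · left
    obtain ⟨m, hm, h⟩ := h₁
    rw [← inv_eq_of_mul_eq_one_right h] at hm
    exact fun x hx hx0 ↦ inv_mem_monomials (fun _ ↦ hL) hm hx hx0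
  have hN1 := eq_one_of_inv_notMem_monomials hN hL h₁
  have hL0 : L ≠ 0 := by
    rintro rfl
    exact hL (by simpa using self_mem_monomials)
  have hL1 : ‖L‖ ≠ 1 := by
    intro h
    refine hL ?_
    rw [Complex.inv_def, Complex.normSq_eq_norm_sq, h]
    simpa using conj_self_mem_monomials
  subst hN1
  obtain ⟨m, hm, h⟩ := h₂
  have hm1 : ‖m‖ = 1 := by
    have := congrArg norm h
    rw [Complex.norm_conj, norm_mul, Complex.ofReal_one, one_mul] at this
    exact (mul_eq_left₀ (norm_ne_zero_iff.2 hL0)).1 this.symm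
  rw [eq_one_of_mem_monomials_one hL1 hm hm1, Complex.ofReal_one, one_mul, mul_one] at h
  exact .inr ⟨rfl, h, hL0, hL1⟩

theorem eq_one_or_eq_neg_one_of_mul_mem_monomials_one (hL : conj L = L)
    (h : ∃ m ∈ monomials L 1, L * m = 1) : L = 1 ∨ L = -1 := by
  obtain ⟨m, hm, h⟩ := h
  obtain ⟨i, j, k, rfl⟩ := mem_monomials.1 hm
  have hnorm : ‖L‖ = 1 := by
    refine (pow_eq_one_iff_of_nonneg (norm_nonneg L) (Nat.succ_ne_zero (i + j))).1 ?_
    simpa [pow_succ, pow_add, mul_comm, mul_left_comm] using congrArg norm h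
  rw [← mul_self_eq_one_iff]
  nth_rw 2 [← hL]
  rw [Complex.mul_conj, Complex.normSq_eq_norm_sq, hnorm]
  simp

end Monomials

section Dyad

omit [CompleteSpace H]

variable {f g : H}

/-- `|a⟩⟨b|` for `a, b ∈ {f, g}`, encoded by `true ↦ f`, `false ↦ g`: thus `T = |f⟩⟨g|` is
`dyad f g true false` and `T*` is `dyad f g false true`. -/
noncomputable def dyad (f g : H) (a b : Bool) : H →L[ℂ] H :=
  rankOne ℂ (cond a f g) (cond b f g)

local notation "𝓜" => monomials ⟪g, f⟫ (‖g‖ ^ 2)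
local notation "𝓜₊" => ((‖g‖ ^ 2 : ℝ) : ℂ) • (𝓜 : Set ℂ)

theorem smul_dyad_mul_smul_dyad (m m' : ℂ) (a b c d : Bool) :
    (m • dyad f g a b) * (m' • dyad f g c d) =
      (m * m' * ⟪cond b f g, cond c f g⟫) • dyad f g a d := by
  rw [smul_mul_smul, dyad, dyad, mul_def, rankOne_comp_rankOne, smul_smul, dyad]

theorem dyad_mul_dyad_adjoint :
    dyad f g true false * dyad f g false true = ((‖g‖ ^ 2 : ℝ) : ℂ) • dyad f g true true := by
  rw [← one_smul ℂ (dyad f g true false), ← one_smul ℂ (dyad f g false true),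
    smul_dyad_mul_smul_dyad]
  simp [inner_self_eq_norm_sq_to_K]

theorem inner_cond_mem_monomials (hf : ‖f‖ = 1) (b c : Bool) :
    ⟪cond b f g, cond c f g⟫ ∈ 𝓜 := by
  rcases b with _ | _ <;> rcases c with _ | _
  · rw [cond_false, inner_self_eq_norm_sq_to_K]
    exact_mod_cast ofReal_mem_monomials
  · exact self_mem_monomials
  · rw [cond_true, cond_false, ← inner_conj_symm f g]
    exact conj_self_mem_monomials
  · rw [cond_true, inner_self_eq_one_of_norm_eq_one hf]
    exact one_mem _

theorem mul_mem_smul_monomials {m m' : ℂ} (hm : m ∈ 𝓜₊) (hm' : m' ∈ 𝓜) : m * m' ∈ 𝓜₊ := by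
  obtain ⟨y, hy, rfl⟩ := hm
  exact ⟨y * m', mul_mem hy hm', by simp only [smul_eq_mul, mul_assoc]⟩

-- A word beginning with `T` and ending with `T*` contains `T T* = N |f⟩⟨f|`.
def monomialDyads (f g : H) : Set (H →L[ℂ] H) :=
  {Z | ∃ m ∈ monomials ⟪g, f⟫ (‖g‖ ^ 2), ∃ a b : Bool,
    (a = true → b = true → m ∈ ((‖g‖ ^ 2 : ℝ) : ℂ) • (monomials ⟪g, f⟫ (‖g‖ ^ 2) : Set ℂ)) ∧
    Z = m • dyad f g a b}

theorem mul_mem_monomialDyads (hf : ‖f‖ = 1) {Z W : H →L[ℂ] H} (hZ : Z ∈ monomialDyads f g)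
    (hW : W ∈ monomialDyads f g) : Z * W ∈ monomialDyads f g := by
  obtain ⟨m, hm, a, b, hab, rfl⟩ := hZ
  obtain ⟨m', hm', c, d, hcd, rfl⟩ := hW
  refine ⟨_, mul_mem (mul_mem hm hm') (inner_cond_mem_monomials hf b c), a, d, fun ha hd ↦ ?_,
    smul_dyad_mul_smul_dyad m m' a b c d⟩
  rcases b with _ | _
  · rcases c with _ | _
    · refine ⟨m * m', mul_mem hm hm', ?_⟩
      simp only [Complex.ofReal_pow, smul_eq_mul, cond_false, inner_self_eq_norm_sq_to_K,
        Complex.coe_algebraMap]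
      ring
    · rw [mul_comm m m', mul_assoc]
      exact mul_mem_smul_monomials (hcd rfl hd) (mul_mem hm (inner_cond_mem_monomials hf _ _))
  · rw [mul_assoc]
    exact mul_mem_smul_monomials (hab ha rfl) (mul_mem hm' (inner_cond_mem_monomials hf _ _))

theorem cond_ne_zero (hfg : LinearIndependent ℂ ![f, g]) (a : Bool) : cond a f g ≠ 0 := by
  rcases a with _ | _
  exacts [hfg.ne_zero 1, hfg.ne_zero 0]

theorem eq_of_smul_cond_eq_smul_cond (hfg : LinearIndependent ℂ ![f, g]) {x y : ℂ} {a c : Bool}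
    (hx : x ≠ 0) (h : x • cond a f g = y • cond c f g) : a = c ∧ x = y := by
  rw [LinearIndependent.pair_iff] at hfg
  rcases a with _ | _ <;> rcases c with _ | _ <;> simp only [cond_false, cond_true] at h
  · exact ⟨rfl, sub_eq_zero.1 (hfg 0 (x - y) (by simp [sub_smul, h])).2⟩
  · exact absurd (hfg (-y) x (by simp [h])).2 hx
  · exact absurd (hfg x (-y) (by simp [h])).1 hx
  · exact ⟨rfl, sub_eq_zero.1 (hfg (x - y) 0 (by simp [sub_smul, h])).1⟩

end Dyad

section RankOneSemigroup

variable {f g : H}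

local notation "𝓜" => monomials ⟪g, f⟫ (‖g‖ ^ 2)
local notation "𝓜₊" => ((‖g‖ ^ 2 : ℝ) : ℂ) • (𝓜 : Set ℂ)
local notation "𝒮" => genSG (rankOne ℂ f g)

theorem adjoint_dyad (a b : Bool) : adjoint (dyad f g a b) = dyad f g b a :=
  adjoint_rankOne _ _

theorem mul_mem_genSG {T A B : H →L[ℂ] H} (hA : A ∈ genSG T) (hB : B ∈ genSG T) :
    A * B ∈ genSG T :=
  mul_mem hA hB

theorem genSG_subset_monomialDyads (hf : ‖f‖ = 1) :
    genSG (rankOne ℂ f g) ⊆ monomialDyads f g := by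
  intro Z hZ
  induction hZ using Subsemigroup.closure_induction with
  | mem Z hZ =>
    rw [adjoint_rankOne] at hZ
    rcases hZ with rfl | rfl
    · exact ⟨1, one_mem _, true, false, by simp, by simp [dyad]⟩
    · exact ⟨1, one_mem _, false, true, by simp, by simp [dyad]⟩
  | mul Z W _ _ hZ hW => exact mul_mem_monomialDyads hf hZ hW

theorem dyad_mem_genSG_true_false : dyad f g true false ∈ 𝒮 :=
  Subsemigroup.subset_closure (by simp [dyad])

theorem dyad_mem_genSG_false_true : dyad f g false true ∈ 𝒮 :=
  Subsemigroup.subset_closure (by simp [dyad])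

theorem smul_dyad_self_mem_genSG (hf : ‖f‖ = 1) {m : ℂ} (hm : m ∈ 𝓜) :
    ((‖g‖ ^ 2 : ℝ) * m : ℂ) • dyad f g true true ∈ 𝒮 := by
  have hT := dyad_mem_genSG_true_false (f := f) (g := g)
  have hT' := dyad_mem_genSG_false_true (f := f) (g := g)
  induction hm using Submonoid.closure_induction_left with
  | one => simpa [dyad_mul_dyad_adjoint] using mul_mem_genSG hT hT'
  | mul_left x hx m _ ih =>
    rcases hx with rfl | rfl | rfl
    · convert mul_mem_genSG hT ih using 1
      rw [← one_smul ℂ (dyad f g true false), smul_dyad_mul_smul_dyad]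
      simp only [cond_true, cond_false]
      ring_nf
    · convert mul_mem_genSG ih hT' using 1
      rw [← one_smul ℂ (dyad f g false true), smul_dyad_mul_smul_dyad]
      simp only [cond_true, cond_false, ← inner_conj_symm f g]
      ring_nf
    · convert mul_mem_genSG ih (mul_mem_genSG hT hT') using 1
      rw [dyad_mul_dyad_adjoint, smul_dyad_mul_smul_dyad, cond_true,
        inner_self_eq_one_of_norm_eq_one hf]
      ring_nf

theorem smul_dyad_mem_genSG (hf : ‖f‖ = 1) {m : ℂ} (hm : m ∈ 𝓜₊) (a b : Bool) :
    m • dyad f g a b ∈ 𝒮 := by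
  have hff := inner_self_eq_one_of_norm_eq_one (𝕜 := ℂ) hf
  have hleft : ∀ x c, x • dyad f g true c ∈ 𝒮 → x • dyad f g false c ∈ 𝒮 := fun x c h ↦ by
    have := mul_mem_genSG dyad_mem_genSG_false_true h
    rwa [← one_smul ℂ (dyad f g false true), smul_dyad_mul_smul_dyad, cond_true, hff, one_mul,
      mul_one] at this
  have hright : ∀ x c, x • dyad f g c true ∈ 𝒮 → x • dyad f g c false ∈ 𝒮 := fun x c h ↦ by
    have := mul_mem_genSG h dyad_mem_genSG_true_false
    rwa [← one_smul ℂ (dyad f g true false), smul_dyad_mul_smul_dyad, cond_true, hff, mul_one,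
      mul_one] at this
  obtain ⟨y, hy, rfl⟩ := hm
  have := smul_dyad_self_mem_genSG hf hy
  rcases a with _ | _ <;> rcases b with _ | _
  · exact hleft _ _ (hright _ _ this)
  · exact hleft _ _ this
  · exact hright _ _ this
  · exact this

theorem isSimpleSemigroup_genSG (hf : ‖f‖ = 1) (hg : g ≠ 0)
    (hinv : ∀ x ∈ 𝓜, x ≠ 0 → x⁻¹ ∈ 𝓜) : IsSimpleSemigroup 𝒮 := by
  rintro J hJ ⟨Z, hZJ, hZ0⟩
  refine Set.Subset.antisymm hJ.1 fun W hW ↦ ?_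
  obtain ⟨z, hz, a, b, -, rfl⟩ := genSG_subset_monomialDyads hf (hJ.1 hZJ)
  obtain ⟨w, hw, c, d, -, rfl⟩ := genSG_subset_monomialDyads hf hW
  set N : ℂ := ((‖g‖ ^ 2 : ℝ) : ℂ)
  set p := ⟪cond a f g, cond a f g⟫ * ⟪cond b f g, cond b f g⟫
  have hcond : ∀ a : Bool, cond a f g ≠ 0 := by
    rintro (_ | _)
    exacts [hg, norm_ne_zero_iff.1 (by simp [hf])]
  have hz0 : z ≠ 0 := by
    rintro rfl
    exact hZ0 (zero_smul _ _)
  have hN0 : N ≠ 0 := by simp [N, hg]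
  have ha : ⟪cond a f g, cond a f g⟫ ≠ 0 := inner_self_ne_zero.2 (hcond a)
  have hb : ⟪cond b f g, cond b f g⟫ ≠ 0 := inner_self_ne_zero.2 (hcond b)
  have hp0 : p ≠ 0 := mul_ne_zero ha hb
  have hp : p ∈ 𝓜 := mul_mem (inner_cond_mem_monomials hf a a) (inner_cond_mem_monomials hf b b)
  have hX : (N • (w * z⁻¹ * p⁻¹ * N⁻¹)) • dyad f g c a ∈ 𝒮 :=
    smul_dyad_mem_genSG hf ⟨_, mul_mem (mul_mem (mul_mem hw (hinv z hz hz0)) (hinv p hp hp0))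
      (hinv N ofReal_mem_monomials hN0), rfl⟩ c a
  have hY : (N • N⁻¹) • dyad f g b d ∈ 𝒮 :=
    smul_dyad_mem_genSG hf ⟨_, hinv N ofReal_mem_monomials hN0, rfl⟩ b d
  convert (hJ.2 _ (hJ.2 _ hZJ _ hX).1 _ hY).2 using 1
  rw [smul_dyad_mul_smul_dyad, smul_dyad_mul_smul_dyad, smul_eq_mul, smul_eq_mul]
  congr 1
  simp only [p]
  field_simp

theorem isSI_genSG (hf : ‖f‖ = 1) (hg : ‖g‖ = 1) (hL : conj ⟪g, f⟫ = ⟪g, f⟫) : IsSI 𝒮 := by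
  intro J hJ Z hZ
  obtain ⟨m, hm, a, b, -, rfl⟩ := genSG_subset_monomialDyads hf (hJ.1 hZ)
  have hcond : ∀ a : Bool, ⟪cond a f g, cond a f g⟫ = 1 := by
    rintro (_ | _)
    exacts [inner_self_eq_one_of_norm_eq_one hg, inner_self_eq_one_of_norm_eq_one hf]
  have hX : (1 : ℂ) • dyad f g b a ∈ 𝒮 := by
    simpa [hg] using smul_dyad_mem_genSG (g := g) hf ⟨1, one_mem _, rfl⟩ b a
  convert (hJ.2 _ (hJ.2 _ hZ _ hX).1 _ hX).2 using 1
  rw [map_smulₛₗ, adjoint_dyad, conj_eq_of_mem_monomials hL hm, smul_dyad_mul_smul_dyad,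
    smul_dyad_mul_smul_dyad, hcond, hcond]
  simp

theorem eq_of_smul_dyad_eq_smul_dyad (hfg : LinearIndependent ℂ ![f, g]) {s t : ℂ}
    {a b c d : Bool} (hs : s ≠ 0) (h : s • dyad f g a b = t • dyad f g c d) :
    a = c ∧ b = d ∧ s = t := by
  have left : ∀ {s t : ℂ} {a b c d : Bool}, s ≠ 0 → s • dyad f g a b = t • dyad f g c d →
      a = c ∧ s * ⟪cond b f g, cond b f g⟫ = t * ⟪cond d f g, cond b f g⟫ := by
    intro s t a b c d hs h
    have h' := congrArg (· (cond b f g)) h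
    simp only [dyad, smul_apply, rankOne_apply, smul_smul] at h'
    exact eq_of_smul_cond_eq_smul_cond hfg
      (mul_ne_zero hs (inner_self_ne_zero.2 (cond_ne_zero hfg b))) h'
  obtain ⟨rfl, hst⟩ := left hs h
  have h' := congrArg adjoint h
  rw [map_smulₛₗ, map_smulₛₗ, adjoint_dyad, adjoint_dyad] at h'
  obtain ⟨rfl, -⟩ := left ((map_ne_zero _).2 hs) h'
  exact ⟨rfl, rfl, mul_right_cancel₀ (inner_self_ne_zero.2 (cond_ne_zero hfg b)) hst⟩

theorem rankOne_mul_adjoint_ne (hfg : LinearIndependent ℂ ![f, g]) :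
    rankOne ℂ f g * adjoint (rankOne ℂ f g) ≠ adjoint (rankOne ℂ f g) * rankOne ℂ f g := by
  intro h
  rw [adjoint_rankOne, mul_def, mul_def, rankOne_comp_rankOne, rankOne_comp_rankOne] at h
  have hg : ⟪g, g⟫ ≠ 0 := inner_self_ne_zero.2 (cond_ne_zero hfg false)
  exact Bool.noConfusion
    (eq_of_smul_dyad_eq_smul_dyad hfg (a := true) (b := true) (c := false) (d := false) hg h).1

-- Every word involving `T` lies here: if it ends in `T*`, it contains `T T* = N |f⟩⟨f|`.
def wordsWithTIdeal (f g : H) : Set (H →L[ℂ] H) :=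
  {Z ∈ genSG (rankOne ℂ f g) | ∃ m ∈ monomials ⟪g, f⟫ (‖g‖ ^ 2), ∃ a b : Bool,
    (b = true → m ∈ ((‖g‖ ^ 2 : ℝ) : ℂ) • (monomials ⟪g, f⟫ (‖g‖ ^ 2) : Set ℂ)) ∧
    Z = m • dyad f g a b}

theorem isSemigroupIdeal_wordsWithTIdeal (hf : ‖f‖ = 1) :
    IsSemigroupIdeal 𝒮 (wordsWithTIdeal f g) := by
  refine ⟨fun Z hZ ↦ hZ.1, ?_⟩
  rintro _ ⟨hZ, m, hm, a, b, hb, rfl⟩ X hX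
  obtain ⟨x, hx, c, d, hcd, rfl⟩ := genSG_subset_monomialDyads hf hX
  refine ⟨⟨mul_mem_genSG hX hZ, _, mul_mem (mul_mem hx hm) (inner_cond_mem_monomials hf d a),
      c, b, fun hb' ↦ ?_, smul_dyad_mul_smul_dyad _ _ _ _ _ _⟩,
    ⟨mul_mem_genSG hZ hX, _, mul_mem (mul_mem hm hx) (inner_cond_mem_monomials hf b c),
      a, d, fun hd ↦ ?_, smul_dyad_mul_smul_dyad _ _ _ _ _ _⟩⟩
  · rw [mul_comm x m, mul_assoc]
    exact mul_mem_smul_monomials (hb hb') (mul_mem hx (inner_cond_mem_monomials hf _ _))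
  · rcases c with _ | _
    · rcases b with _ | _
      · refine ⟨m * x, mul_mem hm hx, ?_⟩
        simp only [Complex.ofReal_pow, smul_eq_mul, cond_false, inner_self_eq_norm_sq_to_K,
          Complex.coe_algebraMap]
        ring
      · rw [mul_assoc]
        exact mul_mem_smul_monomials (hb rfl) (mul_mem hx (inner_cond_mem_monomials hf _ _))
    · rw [mul_comm m x, mul_assoc]
      exact mul_mem_smul_monomials (hcd rfl hd) (mul_mem hm (inner_cond_mem_monomials hf _ _))

theorem exists_mul_eq_one_of_isSI (hfg : LinearIndependent ℂ ![f, g]) (hf : ‖f‖ = 1)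
    (hSI : IsSI 𝒮) : ∃ m ∈ 𝓜, ((‖g‖ ^ 2 : ℝ) : ℂ) * m = 1 := by
  have hT : rankOne ℂ f g ∈ wordsWithTIdeal f g :=
    ⟨dyad_mem_genSG_true_false, 1, one_mem _, true, false, by simp, (one_smul _ _).symm⟩
  obtain ⟨-, m, -, a, b, hb, h⟩ := hSI _ (isSemigroupIdeal_wordsWithTIdeal hf) _ hT
  rw [adjoint_rankOne, ← one_smul ℂ (rankOne ℂ g f)] at h
  obtain ⟨-, rfl, rfl⟩ := eq_of_smul_dyad_eq_smul_dyad hfg (a := false) (b := true) one_ne_zero h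
  exact hb rfl

theorem exists_conj_eq_of_isSI (hfg : LinearIndependent ℂ ![f, g]) (hf : ‖f‖ = 1)
    (hSI : IsSI 𝒮) : ∃ m ∈ 𝓜, conj ⟪g, f⟫ = ⟪g, f⟫ * (((‖g‖ ^ 2 : ℝ) : ℂ) * m) := by
  by_cases hL : ⟪g, f⟫ = 0
  · exact ⟨1, one_mem _, by simp [hL]⟩
  set T := rankOne ℂ f g
  have hT : T ∈ 𝒮 := dyad_mem_genSG_true_false
  have hTT : T * T = ⟪g, f⟫ • T := rankOne_comp_rankOne _ _ _ _
  obtain ⟨A, hA, B, hB, h⟩ := hSI _ (isSemigroupIdeal_principalIdeal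
    (S := Subsemigroup.closure {T, adjoint T}) (mul_mem hT hT)) _ (self_mem_principalIdeal _ _)
  have hTJ : T ∈ wordsWithTIdeal f g :=
    ⟨hT, 1, one_mem _, true, false, by simp, (one_smul _ _).symm⟩
  obtain ⟨-, m, -, a, b, hb, hABT⟩ := principalIdeal_subset_of_isSemigroupIdeal
    (isSemigroupIdeal_wordsWithTIdeal hf) hTJ ⟨A, hA, B, hB, rfl⟩
  rw [hTT, map_smulₛₗ, adjoint_rankOne, mul_smul_comm, smul_mul_assoc, hABT, smul_smul] at h
  obtain ⟨-, rfl, hLm⟩ := eq_of_smul_dyad_eq_smul_dyad hfg (a := false) (b := true)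
    ((map_ne_zero _).2 hL) h
  obtain ⟨y, hy, rfl⟩ := hb rfl
  exact ⟨y, hy, hLm⟩

theorem not_isSimpleSemigroup_genSG (hfg : LinearIndependent ℂ ![f, g]) (hf : ‖f‖ = 1)
    (hg : ‖g‖ = 1) (hL : conj ⟪g, f⟫ = ⟪g, f⟫) (hL0 : ⟪g, f⟫ ≠ 0) (hL1 : ⟪g, f⟫ ≠ 1)
    (hLm1 : ⟪g, f⟫ ≠ -1) : ¬ IsSimpleSemigroup 𝒮 := by
  intro hS
  set T := rankOne ℂ f g
  have hT : T ∈ 𝒮 := dyad_mem_genSG_true_false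
  have hTT : T * T = ⟪g, f⟫ • T := rankOne_comp_rankOne _ _ _ _
  have hTT0 : T * T ≠ 0 := by
    rw [hTT]
    exact smul_ne_zero hL0 (rankOne_ne_zero (cond_ne_zero hfg true) (cond_ne_zero hfg false))
  have hJ := isSemigroupIdeal_principalIdeal (S := Subsemigroup.closure {T, adjoint T})
    (mul_mem hT hT)
  obtain ⟨A, hA, B, hB, h⟩ :
      T ∈ principalIdeal (Subsemigroup.closure {T, adjoint T} : Set (H →L[ℂ] H)) (T * T) := by
    rw [hS _ hJ ⟨_, self_mem_principalIdeal _ _, hTT0⟩]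
    exact hT
  obtain ⟨m, hm, a, b, -, hABT⟩ :=
    genSG_subset_monomialDyads hf (principalIdeal_subset (S := Subsemigroup.closure {T, adjoint T})
      hT ⟨A, hA, B, hB, rfl⟩)
  rw [hTT, mul_smul_comm, smul_mul_assoc, hABT, smul_smul, ← one_smul ℂ T] at h
  obtain ⟨-, -, h1⟩ := eq_of_smul_dyad_eq_smul_dyad hfg (a := true) (b := false) one_ne_zero h
  rw [hg, one_pow] at hm
  rcases eq_one_or_eq_neg_one_of_mul_mem_monomials_one hL ⟨m, hm, h1.symm⟩ with h | h
  exacts [hL1 h, hLm1 h]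

theorem rankOne_mul_adjoint_comm_of_eq_smul {c : ℂ} (hc : g = c • f) :
    rankOne ℂ f g * adjoint (rankOne ℂ f g) = adjoint (rankOne ℂ f g) * rankOne ℂ f g := by
  subst hc
  rw [adjoint_rankOne, mul_def, mul_def, rankOne_comp_rankOne, rankOne_comp_rankOne]
  simp only [map_smul, map_smulₛₗ, smul_apply, inner_smul_left, inner_smul_right, smul_smul]
  congr 1
  ring

theorem inner_apply_mem_monomials (hf : ‖f‖ = 1) {A : H →L[ℂ] H} (hA : A ∈ insert 1 𝒮) :
    ⟪f, A f⟫ ∈ 𝓜 := by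
  rcases hA with rfl | hA
  · rw [one_apply_eq_self, inner_self_eq_one_of_norm_eq_one hf]
    exact one_mem _
  · obtain ⟨m, hm, a, b, -, rfl⟩ := genSG_subset_monomialDyads hf hA
    simp only [dyad, smul_apply, rankOne_apply, inner_smul_right]
    exact mul_mem hm
      (mul_mem (inner_cond_mem_monomials hf b true) (inner_cond_mem_monomials hf true a))

theorem isSimpleSemigroup_genSG_of_eq_smul (hf : ‖f‖ = 1) (hg : g ≠ 0) {c : ℂ} (hc : g = c • f)
    (hc1 : ‖c‖ = 1) : IsSimpleSemigroup 𝒮 := by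
  have hL : ⟪g, f⟫ = conj c := by
    rw [hc, inner_smul_left, inner_self_eq_one_of_norm_eq_one hf, mul_one]
  refine isSimpleSemigroup_genSG hf hg fun x hx hx0 ↦ inv_mem_monomials (fun _ ↦ ?_) ?_ hx hx0
  · have hinv : ⟪g, f⟫⁻¹ = conj ⟪g, f⟫ := by
      rw [Complex.inv_def, Complex.normSq_eq_norm_sq, hL, Complex.norm_conj, hc1]
      simp
    rw [hinv]
    exact conj_self_mem_monomials
  · rw [hc, norm_smul, hf, hc1]
    simp

theorem conj_eq_of_isSI_of_eq_smul (hf : ‖f‖ = 1) {c : ℂ} (hc : g = c • f) (hc0 : c ≠ 0)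
    (hc1 : ‖c‖ ≠ 1) (hSI : IsSI 𝒮) : conj c = c := by
  set T := rankOne ℂ f g
  have hT : T ∈ 𝒮 := dyad_mem_genSG_true_false
  obtain ⟨A, hA, B, hB, h⟩ := hSI _ (isSemigroupIdeal_principalIdeal
    (S := Subsemigroup.closure {T, adjoint T}) hT) _ (self_mem_principalIdeal _ _)
  have key := congrArg (fun X ↦ ⟪f, X f⟫) h
  simp only [T, adjoint_rankOne, mul_apply_eq_comp, rankOne_apply, hc, map_smulₛₗ, smul_apply,
    RingHom.id_apply, inner_smul_right, inner_self_eq_one_of_norm_eq_one hf, mul_one,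
    Complex.conj_conj] at key
  have hx : ⟪f, B f⟫ * ⟪f, A f⟫ ∈ monomials (conj c) 1 := by
    refine monomials_le_monomials_one ?_
    have hM : monomials ⟪g, f⟫ (‖g‖ ^ 2) = monomials (conj c) (‖conj c‖ ^ 2) := by
      rw [hc, inner_smul_left, inner_self_eq_one_of_norm_eq_one hf, mul_one, norm_smul, hf,
        mul_one, Complex.norm_conj]
    rw [← hM]
    exact mul_mem (inner_apply_mem_monomials hf hB) (inner_apply_mem_monomials hf hA)
  have hx1 := eq_one_of_mem_monomials_one (by rwa [Complex.norm_conj]) hx (by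
    have := congrArg norm key
    rw [norm_mul, Complex.norm_conj] at this
    exact (mul_eq_left₀ (norm_ne_zero_iff.2 hc0)).1 this.symm)
  rw [hx1, mul_one] at key
  exact key.symm

theorem isSimpleSemigroup_genSG_of_isSI_of_eq_smul (hf : ‖f‖ = 1)
    (hT : rankOne ℂ f g ≠ adjoint (rankOne ℂ f g)) {c : ℂ} (hc : g = c • f) (hSI : IsSI 𝒮) :
    IsSimpleSemigroup 𝒮 := by
  have hg : g ≠ 0 := by
    rintro rfl
    simp at hT
  have hc0 : c ≠ 0 := by
    rintro rfl
    simp [hc] at hg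
  by_cases hc1 : ‖c‖ = 1
  · exact isSimpleSemigroup_genSG_of_eq_smul hf hg hc hc1
  · refine absurd ?_ hT
    simp only [adjoint_rankOne, hc, map_smulₛₗ, conj_eq_of_isSI_of_eq_smul hf hc hc0 hc1 hSI]

end RankOneSemigroup

theorem eq_rankOne_of_range_eq_span {T : H →L[ℂ] H} {f : H} (hf : ‖f‖ = 1)
    (h : LinearMap.range (T : H →ₗ[ℂ] H) = Submodule.span ℂ {f}) :
    T = rankOne ℂ f (adjoint T f) := by
  ext x
  obtain ⟨a, ha⟩ := Submodule.mem_span_singleton.1 (h ▸ LinearMap.mem_range_self (T : H →ₗ[ℂ] H) x)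
  change a • f = T x at ha
  rw [rankOne_apply, adjoint_inner_left, ← ha, inner_smul_right,
    inner_self_eq_one_of_norm_eq_one hf, mul_one]

/-- for `T` rank one nonselfadjoint, `S(T, T*)` is a nonsimple SI
semigroup iff `T` is non-normal, `tr T` is real with `tr T ∉ {0, 1, -1}`, and
`‖T‖ = 1`. -/
theorem stmt13 (T : H →L[ℂ] H) (hnsa : T ≠ adjoint T)
    (f : H) (hf : ‖f‖ = 1)
    (hrange : LinearMap.range (T : H →ₗ[ℂ] H) = Submodule.span ℂ {f}) :
    (IsSI (genSG T) ∧ ¬ IsSimpleSemigroup (genSG T)) ↔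
      (T * adjoint T ≠ adjoint T * T ∧
        (starRingEnd ℂ) ⟪f, T f⟫ = ⟪f, T f⟫ ∧
        ⟪f, T f⟫ ∉ ({0, 1, -1} : Set ℂ) ∧ ‖T‖ = 1) := by
  obtain ⟨g, rfl⟩ : ∃ g, T = rankOne ℂ f g := ⟨_, eq_rankOne_of_range_eq_span hf hrange⟩
  have htr : ⟪f, rankOne ℂ f g f⟫ = ⟪g, f⟫ := by
    rw [rankOne_apply, inner_smul_right, inner_self_eq_one_of_norm_eq_one hf, mul_one]
  rw [htr, norm_rankOne, hf, one_mul]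
  simp only [Set.mem_insert_iff, Set.mem_singleton_iff, not_or]
  by_cases hfg : LinearIndependent ℂ ![f, g]
  · constructor
    · rintro ⟨hSI, hS⟩
      rcases inv_mem_monomials_or (sq_nonneg ‖g‖) (exists_mul_eq_one_of_isSI hfg hf hSI)
        (exists_conj_eq_of_isSI hfg hf hSI) with hinv | ⟨hN, hL, hL0, hL1⟩
      · exact absurd (isSimpleSemigroup_genSG hf (cond_ne_zero hfg false) hinv) hS
      refine ⟨rankOne_mul_adjoint_ne hfg, hL, ⟨hL0, ?_, ?_⟩,
        (pow_eq_one_iff_of_nonneg (norm_nonneg g) two_ne_zero).1 hN⟩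
      all_goals rintro h; simp [h] at hL1
    · rintro ⟨-, hL, ⟨hL0, hL1, hLm1⟩, hg⟩
      exact ⟨isSI_genSG hf hg hL, not_isSimpleSemigroup_genSG hfg hf hg hL hL0 hL1 hLm1⟩
  · obtain ⟨c, hc⟩ : ∃ c : ℂ, g = c • f := by
      rw [LinearIndependent.pair_iff' (norm_ne_zero_iff.1 (by simp [hf]))] at hfg
      simp only [not_forall, not_not] at hfg
      exact hfg.imp fun _ h ↦ h.symm
    exact iff_of_false
      (fun ⟨hSI, hS⟩ ↦ hS (isSimpleSemigroup_genSG_of_isSI_of_eq_smul hf hnsa hc hSI))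
      (fun h ↦ h.1 (rankOne_mul_adjoint_comm_of_eq_smul hc))
end

section
/- Let T be a rank one bounded operator on a complex Hilbert space H that is not normal (T T* ≠ T* T), is a partial isometry (T = T T* T), and has tr T ≠ 0. Then tr T is real if and only if the semigroup S(T, T*) generated by T and T* is a selfadjoint-ideal (SI) semigroup. -/
/-!
Write `T = |f⟩⟨g|` with `g = T* f`. The partial-isometry condition makes `g` a unit vector, and
non-normality says `g` is not parallel to `f`, so `λ = tr T = ⟪g, f⟫` satisfies `0 < |λ| < 1`.
Since `|f⟩⟨g| |u⟩⟨v| = ⟪g, u⟫ |f⟩⟨v|`, every element of `S(T, T*)` is `μ |u⟩⟨v|` with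
`u, v ∈ {f, g}` and `μ` a monomial in `λ` and `conj λ`.

If `λ` is real, so is every such `μ`, and then `Z* = W Z W` with `W = |v⟩⟨u| ∈ S(T, T*)` for
`Z = μ |u⟩⟨v|`; hence every ideal is selfadjoint. If `λ` is not real, the ideal `S ∩ λ S` contains
`T² = λ T` but not its adjoint `conj λ T*`: pairing with `g` and `f` would give
`conj λ = λ · λ^m (conj λ)^n`, which is impossible for `0 < |λ| < 1` unless `m = n = 0`.
-/

open ContinuousLinearMap
open scoped ComplexInnerProductSpace

variable {H : Type*} [NormedAddCommGroup H] [InnerProductSpace ℂ H] [CompleteSpace H]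

open InnerProductSpace ComplexConjugate
open scoped InnerProductSpace Pointwise

theorem isSemigroupIdeal_inter_smul {R M : Type*} [Mul M] [SMul R M] [IsScalarTower R M M]
    [SMulCommClass R M M] (S : Subsemigroup M) (r : R) :
    IsSemigroupIdeal (S : Set M) (S ∩ r • (S : Set M)) := by
  refine ⟨Set.inter_subset_left, ?_⟩
  rintro _ ⟨hZ, Y, hY, rfl⟩ X hX
  exact ⟨⟨mul_mem hX hZ, X * Y, mul_mem hX hY, (mul_smul_comm r X Y).symm⟩,
    ⟨mul_mem hZ hX, Y * X, mul_mem hY hX, (smul_mul_assoc r Y X).symm⟩⟩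

theorem isSI_of_forall_adjoint_eq_mul_mul {S : Set (H →L[ℂ] H)}
    (h : ∀ Z ∈ S, ∃ X ∈ S, ∃ Y ∈ S, adjoint Z = X * Z * Y) : IsSI S := by
  intro J hJ Z hZ
  obtain ⟨X, hX, Y, hY, hZ'⟩ := h Z (hJ.1 hZ)
  rw [hZ']
  exact (hJ.2 _ (hJ.2 Z hZ X hX).1 Y hY).2

theorem eq_of_mul_eq_of_mem_closure_pair {K : Type*} [NormedField K] {a b μ : K}
    (ha₀ : a ≠ 0) (ha₁ : ‖a‖ < 1) (hb : ‖b‖ = ‖a‖) (hμ : μ ∈ Submonoid.closure {a, b})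
    (h : a * μ = b) : a = b := by
  obtain ⟨m, n, rfl⟩ := (Submonoid.mem_closure_pair a b μ).1 hμ
  have hnorm : ‖a‖ ^ (m + n + 1) = ‖a‖ ^ 1 := by
    have h' := congrArg norm h
    rw [norm_mul, norm_mul, norm_pow, norm_pow, hb] at h'
    calc ‖a‖ ^ (m + n + 1) = ‖a‖ * (‖a‖ ^ m * ‖a‖ ^ n) := by ring
      _ = ‖a‖ ^ 1 := by rw [h', pow_one]
  have hmn := pow_right_injective₀ (norm_pos_iff.2 ha₀) ha₁.ne hnorm
  obtain ⟨rfl, rfl⟩ : m = 0 ∧ n = 0 := by omega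
  simpa using h

section RankOne

variable {𝕜 E : Type*} [RCLike 𝕜] [NormedAddCommGroup E] [InnerProductSpace 𝕜 E]

theorem rankOne_mul_rankOne (x y z w : E) :
    rankOne 𝕜 x y * rankOne 𝕜 z w = ⟪y, z⟫_𝕜 • rankOne 𝕜 x w :=
  rankOne_comp_rankOne x y z w

theorem exists_eq_smul_rankOne_of_mem_closure {F : Set E} {M : Submonoid 𝕜}
    (hM : ∀ u ∈ F, ∀ v ∈ F, ⟪u, v⟫_𝕜 ∈ M) {Z : E →L[𝕜] E}
    (hZ : Z ∈ Subsemigroup.closure (Set.image2 (fun u v => rankOne 𝕜 u v) F F)) :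
    ∃ μ ∈ M, ∃ u ∈ F, ∃ v ∈ F, Z = μ • rankOne 𝕜 u v := by
  induction hZ using Subsemigroup.closure_induction with
  | mem _ h =>
    obtain ⟨u, hu, v, hv, rfl⟩ := h
    exact ⟨1, one_mem M, u, hu, v, hv, (one_smul 𝕜 _).symm⟩
  | mul _ _ _ _ ih₁ ih₂ =>
    obtain ⟨μ, hμ, u, hu, v, hv, rfl⟩ := ih₁
    obtain ⟨ν, hν, u', hu', v', hv', rfl⟩ := ih₂
    refine ⟨μ * ν * ⟪v, u'⟫_𝕜, mul_mem (mul_mem hμ hν) (hM v hv u' hu'), u, hu, v', hv', ?_⟩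
    rw [smul_mul_smul_comm, rankOne_mul_rankOne, smul_smul]

theorem inner_apply_mem_of_mem_closure {F : Set E} {M : Submonoid 𝕜}
    (hM : ∀ u ∈ F, ∀ v ∈ F, ⟪u, v⟫_𝕜 ∈ M) {Z : E →L[𝕜] E}
    (hZ : Z ∈ Subsemigroup.closure (Set.image2 (fun u v => rankOne 𝕜 u v) F F))
    {x y : E} (hx : x ∈ F) (hy : y ∈ F) : ⟪x, Z y⟫_𝕜 ∈ M := by
  obtain ⟨μ, hμ, u, hu, v, hv, rfl⟩ := exists_eq_smul_rankOne_of_mem_closure hM hZ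
  rw [smul_apply, rankOne_apply, inner_smul_right, inner_smul_right]
  exact mul_mem hμ (mul_mem (hM v hv y hy) (hM x hx u hu))

theorem inner_mem_closure_inner_pair {f g : E} (hf : ‖f‖ = 1) (hg : ‖g‖ = 1) :
    ∀ u ∈ ({f, g} : Set E), ∀ v ∈ ({f, g} : Set E),
      ⟪u, v⟫_𝕜 ∈ Submonoid.closure {⟪g, f⟫_𝕜, conj ⟪g, f⟫_𝕜} := by
  have hself : ∀ w : E, ‖w‖ = 1 → ⟪w, w⟫_𝕜 ∈ Submonoid.closure {⟪g, f⟫_𝕜, conj ⟪g, f⟫_𝕜} :=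
    fun w hw => by simp [inner_self_eq_norm_sq_to_K, hw, one_mem]
  rintro _ (rfl | rfl) _ (rfl | rfl)
  · exact hself _ hf
  · rw [← inner_conj_symm]
    exact Submonoid.subset_closure (by simp)
  · exact Submonoid.subset_closure (by simp)
  · exact hself _ hg

theorem norm_inner_lt_one_of_rankOne_self_ne {f g : E} (hf : ‖f‖ = 1) (hg : ‖g‖ = 1)
    (h : rankOne 𝕜 f f ≠ rankOne 𝕜 g g) : ‖⟪g, f⟫_𝕜‖ < 1 := by
  refine ((norm_inner_le_norm g f).trans_eq (by rw [hf, hg, one_mul])).lt_of_ne fun heq => h ?_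
  have hf₀ : f ≠ 0 := norm_ne_zero_iff.1 (by simp [hf])
  have hg₀ : g ≠ 0 := norm_ne_zero_iff.1 (by simp [hg])
  obtain ⟨r, -, rfl⟩ := (norm_inner_eq_norm_iff hg₀ hf₀).1 (by rw [heq, hf, hg, one_mul])
  have hr : ‖r‖ = 1 := by simpa [norm_smul, hg] using hf
  simp [map_smulₛₗ, smul_smul, RCLike.conj_mul, hr]

variable [CompleteSpace E]

theorem eq_rankOne_adjoint_apply {T : E →L[𝕜] E} {f : E} (hf : ‖f‖ = 1)
    (hrange : LinearMap.range (T : E →ₗ[𝕜] E) ≤ 𝕜 ∙ f) : T = rankOne 𝕜 f (adjoint T f) := by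
  ext x
  obtain ⟨a, ha⟩ := Submodule.mem_span_singleton.1 (hrange (LinearMap.mem_range_self _ x))
  simp only [coe_coe] at ha
  rw [rankOne_apply, adjoint_inner_left, ← ha, inner_smul_right, inner_self_eq_norm_sq_to_K, hf]
  simp

theorem norm_eq_one_of_rankOne_eq_mul_adjoint_mul {f g : E} (hf : ‖f‖ = 1) (hg : g ≠ 0)
    (h : rankOne 𝕜 f g = rankOne 𝕜 f g * adjoint (rankOne 𝕜 f g) * rankOne 𝕜 f g) :
    ‖g‖ = 1 := by
  have hR : rankOne 𝕜 f g ≠ 0 := rankOne_ne_zero (norm_ne_zero_iff.1 (by simp [hf])) hg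
  rw [adjoint_rankOne, rankOne_mul_rankOne, smul_mul_assoc, rankOne_mul_rankOne,
    inner_self_eq_norm_sq_to_K, inner_self_eq_norm_sq_to_K, hf, smul_smul,
    ← one_smul 𝕜 (rankOne 𝕜 f g), smul_smul] at h
  have h1 := smul_left_injective 𝕜 hR h
  simp only [one_pow, RCLike.ofReal_one, mul_one] at h1
  norm_cast at h1
  exact (pow_eq_one_iff_of_nonneg (norm_nonneg g) two_ne_zero).1 h1.symm

theorem adjoint_smul_rankOne_eq_mul_mul {u v : E} (hu : ‖u‖ = 1) (hv : ‖v‖ = 1) {μ : 𝕜}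
    (hμ : conj μ = μ) :
    adjoint (μ • rankOne 𝕜 u v) = rankOne 𝕜 v u * (μ • rankOne 𝕜 u v) * rankOne 𝕜 v u := by
  rw [← star_eq_adjoint, star_smul, star_eq_adjoint, adjoint_rankOne, mul_smul_comm,
    smul_mul_assoc, rankOne_mul_rankOne, smul_mul_assoc, rankOne_mul_rankOne,
    inner_self_eq_norm_sq_to_K, inner_self_eq_norm_sq_to_K, hu, hv]
  simp [hμ]

end RankOne

theorem genSG_rankOne (f g : H) :
    genSG (rankOne ℂ f g) = Subsemigroup.closure {rankOne ℂ f g, rankOne ℂ g f} := by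
  rw [genSG, adjoint_rankOne]

theorem genSG_rankOne_subset_closure (f g : H) :
    genSG (rankOne ℂ f g) ⊆
      Subsemigroup.closure (Set.image2 (fun u v => rankOne ℂ u v) {f, g} {f, g}) := by
  rw [genSG_rankOne]
  refine Subsemigroup.closure_mono ?_
  rintro _ (rfl | rfl) <;> exact Set.mem_image2_of_mem (by simp) (by simp)

theorem rankOne_mem_genSG {f g u v : H} (hf : ‖f‖ = 1) (hg : ‖g‖ = 1)
    (hu : u ∈ ({f, g} : Set H)) (hv : v ∈ ({f, g} : Set H)) :
    rankOne ℂ u v ∈ genSG (rankOne ℂ f g) := by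
  rw [genSG_rankOne]
  have hT : rankOne ℂ f g ∈ Subsemigroup.closure {rankOne ℂ f g, rankOne ℂ g f} :=
    Subsemigroup.subset_closure (by simp)
  have hA : rankOne ℂ g f ∈ Subsemigroup.closure {rankOne ℂ f g, rankOne ℂ g f} :=
    Subsemigroup.subset_closure (by simp)
  rcases hu with rfl | rfl <;> rcases hv with rfl | rfl
  · simpa [rankOne_mul_rankOne, inner_self_eq_norm_sq_to_K, hg] using mul_mem hT hA
  · exact hT
  · exact hA
  · simpa [rankOne_mul_rankOne, inner_self_eq_norm_sq_to_K, hf] using mul_mem hA hT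

theorem isSI_genSG_rankOne {f g : H} (hf : ‖f‖ = 1) (hg : ‖g‖ = 1)
    (hreal : conj ⟪g, f⟫ = ⟪g, f⟫) : IsSI (genSG (rankOne ℂ f g)) := by
  refine isSI_of_forall_adjoint_eq_mul_mul fun Z hZ => ?_
  obtain ⟨μ, hμ, u, hu, v, hv, rfl⟩ := exists_eq_smul_rankOne_of_mem_closure
    (inner_mem_closure_inner_pair hf hg) (genSG_rankOne_subset_closure f g hZ)
  have hμ_real : conj μ = μ := by
    rw [hreal, Set.pair_eq_singleton, Submonoid.mem_closure_singleton] at hμ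
    obtain ⟨n, rfl⟩ := hμ
    rw [map_pow, hreal]
  have hunit : ∀ w ∈ ({f, g} : Set H), ‖w‖ = 1 := by rintro _ (rfl | rfl) <;> assumption
  exact ⟨_, rankOne_mem_genSG hf hg hv hu, _, rankOne_mem_genSG hf hg hv hu,
    adjoint_smul_rankOne_eq_mul_mul (hunit u hu) (hunit v hv) hμ_real⟩

theorem conj_inner_eq_of_isSI_genSG_rankOne {f g : H} (hf : ‖f‖ = 1) (hg : ‖g‖ = 1)
    (h₀ : ⟪g, f⟫ ≠ 0) (h₁ : ‖⟪g, f⟫‖ < 1) (hSI : IsSI (genSG (rankOne ℂ f g))) :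
    conj ⟪g, f⟫ = ⟪g, f⟫ := by
  rw [genSG_rankOne] at hSI
  set S := Subsemigroup.closure {rankOne ℂ f g, rankOne ℂ g f}
  have hT : rankOne ℂ f g ∈ S := Subsemigroup.subset_closure (by simp)
  have hsq : rankOne ℂ f g * rankOne ℂ f g ∈ (S : Set (H →L[ℂ] H)) ∩ ⟪g, f⟫ • (S : Set _) :=
    ⟨mul_mem hT hT, rankOne ℂ f g, hT, (rankOne_mul_rankOne f g f g).symm⟩
  obtain ⟨-, Y, hY, hYeq⟩ := hSI _ (isSemigroupIdeal_inter_smul S ⟪g, f⟫) _ hsq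
  rw [rankOne_mul_rankOne, ← star_eq_adjoint, star_smul, star_eq_adjoint, adjoint_rankOne]
    at hYeq
  have key : ⟪g, f⟫ * ⟪g, Y f⟫ = conj ⟪g, f⟫ := by
    have := congrArg (fun Z => ⟪g, Z f⟫) hYeq
    simpa [rankOne_mul_rankOne, inner_smul_right, inner_self_eq_norm_sq_to_K, hf, hg] using this
  refine (eq_of_mul_eq_of_mem_closure_pair h₀ h₁ (RCLike.norm_conj _) ?_ key).symm
  exact inner_apply_mem_of_mem_closure (inner_mem_closure_inner_pair hf hg)
    (genSG_rankOne_subset_closure f g (by rwa [genSG_rankOne])) (by simp) (by simp)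

/-- for `T` rank one, non-normal, a partial isometry, with `tr T ≠ 0`:
`tr T` is real iff `S(T, T*)` is an SI semigroup. -/
theorem stmt14 (T : H →L[ℂ] H)
    (hnn : T * adjoint T ≠ adjoint T * T)
    (hpi : T = T * adjoint T * T)
    (f : H) (hf : ‖f‖ = 1)
    (hrange : LinearMap.range (T : H →ₗ[ℂ] H) = Submodule.span ℂ {f})
    (htr : ⟪f, T f⟫ ≠ 0) :
    (starRingEnd ℂ) ⟪f, T f⟫ = ⟪f, T f⟫ ↔ IsSI (genSG T) := by
  obtain ⟨g, rfl⟩ : ∃ g, T = rankOne ℂ f g := ⟨_, eq_rankOne_adjoint_apply hf hrange.le⟩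
  have htr_eq : ⟪f, rankOne ℂ f g f⟫ = ⟪g, f⟫ := by
    simp [inner_self_eq_norm_sq_to_K, hf]
  rw [htr_eq] at htr ⊢
  have hg : ‖g‖ = 1 :=
    norm_eq_one_of_rankOne_eq_mul_adjoint_mul hf (by rintro rfl; simp at htr) hpi
  have hlt : ‖⟪g, f⟫‖ < 1 := norm_inner_lt_one_of_rankOne_self_ne hf hg <| by
    simpa [rankOne_mul_rankOne, inner_self_eq_norm_sq_to_K, hf, hg] using hnn
  exact ⟨isSI_genSG_rankOne hf hg, conj_inner_eq_of_isSI_genSG_rankOne hf hg htr hlt⟩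
end
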